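/- arXiv:math/9610219 — 10 statements merged into one kernel-verified Lean document; each statement's English description precedes it below -/
import Mathlib

section
/- For every cardinal κ with ℵ₀ < κ < 𝔠 there exists a σ-ideal I on the Cantor space 2^ω which contains all singletons, does not contain 2^ω, and has a Borel basis (every member of I is contained in a Borel member of I), such that: (a) there exists a pairwise disjoint family of κ many Borel subsets of 2^ω none of which belongs to I, and (b) every pairwise disjoint family of Borel subsets of 2^ω none of which belongs to I has cardinality at most κ. In particular I satisfies neither ccc nor condition (B), but satisfies the κ⁺-chain condition. -/
open Set MeasureTheory

/-- The Cantor space `2^ω`: functions `ℕ → ZMod 2` with the product topology. -/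
abbrev CantorSp : Type := ℕ → ZMod 2

namespace Stmt0Aux

/-- Projection onto even coordinates. -/
def proj : CantorSp → CantorSp := fun y n => y (2 * n)

lemma continuous_proj : Continuous proj :=
  continuous_pi fun n => continuous_apply (2 * n)

/-- Interleaving: `emb x z` lies in the fiber of `proj` over `x`. -/
def emb (x : CantorSp) (z : CantorSp) : CantorSp := fun n =>
  if Even n then x (n / 2) else z (n / 2)

lemma proj_emb (x z : CantorSp) : proj (emb x z) = x := by
  funext n
  have h2 : 2 * n / 2 = n := by omega
  simp [proj, emb, even_two_mul, h2]

lemma emb_inj (x : CantorSp) : Function.Injective (emb x) := by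
  intro z w h
  funext n
  have := congrFun h (2 * n + 1)
  have hodd : ¬ Even (2 * n + 1) := by
    simp [Nat.even_add_one, even_two_mul]
  have hdiv : (2 * n + 1) / 2 = n := by omega
  simpa [emb, hodd, hdiv] using this

lemma borel_of_closed {s : Set CantorSp} (h : IsClosed s) :
    MeasurableSet[borel CantorSp] s := by
  have ho : MeasurableSet[borel CantorSp] sᶜ :=
    MeasurableSpace.measurableSet_generateFrom h.isOpen_compl
  simpa using ho.compl

lemma mk_cantor : Cardinal.mk CantorSp = Cardinal.continuum := by
  rw [Cardinal.mk_arrow]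
  simp

end Stmt0Aux

open Stmt0Aux in
/-- For every cardinal `κ` with `ℵ₀ < κ < 𝔠` there is a σ-ideal `I` on `2^ω`
(containing all singletons, not containing `2^ω`, with a Borel basis) such that
there is a pairwise disjoint family of `κ` many Borel sets not in `I`, while every
pairwise disjoint family of Borel sets not in `I` has cardinality at most `κ`. -/
theorem stmt0 (κ : Cardinal) (h1 : Cardinal.aleph0 < κ) (h2 : κ < Cardinal.continuum) :
    ∃ I : Set (Set CantorSp),
      -- `I` is closed under subsets
      (∀ A B : Set CantorSp, A ⊆ B → B ∈ I → A ∈ I) ∧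
      -- `I` is closed under countable unions (hence a σ-ideal)
      (∀ f : ℕ → Set CantorSp, (∀ n, f n ∈ I) → (⋃ n, f n) ∈ I) ∧
      -- `I` contains all singletons
      (∀ x : CantorSp, {x} ∈ I) ∧
      -- `I` does not contain the whole space
      (Set.univ : Set CantorSp) ∉ I ∧
      -- `I` has a Borel basis
      (∀ A ∈ I, ∃ B ∈ I, A ⊆ B ∧ MeasurableSet[borel CantorSp] B) ∧
      -- (a) there is a pairwise disjoint family of κ many Borel sets not in `I`
      (∃ F : Set (Set CantorSp), F.PairwiseDisjoint id ∧
        (∀ B ∈ F, MeasurableSet[borel CantorSp] B ∧ B ∉ I) ∧ Cardinal.mk F = κ) ∧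
      -- (b) every pairwise disjoint family of Borel sets not in `I` has size at most κ
      (∀ F : Set (Set CantorSp), F.PairwiseDisjoint id →
        (∀ B ∈ F, MeasurableSet[borel CantorSp] B ∧ B ∉ I) → Cardinal.mk F ≤ κ) := by
  classical
  have haleph1κ : Cardinal.aleph 1 ≤ κ := by
    rw [← Cardinal.succ_aleph0]
    exact Order.succ_le_of_lt h1
  -- choose `T` of size `κ` and `W` of size `ℵ₁`
  obtain ⟨T, hT⟩ : ∃ T : Set CantorSp, Cardinal.mk T = κ :=
    Cardinal.le_mk_iff_exists_set.1 (by rw [mk_cantor]; exact h2.le)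
  obtain ⟨W, hW⟩ : ∃ W : Set CantorSp, Cardinal.mk W = Cardinal.aleph 1 :=
    Cardinal.le_mk_iff_exists_set.1 (by rw [mk_cantor]; exact Cardinal.aleph_one_le_continuum)
  have hTne : Nonempty T := by
    rw [← Cardinal.mk_ne_zero_iff, hT]
    exact fun h => by simp [h] at h1
  -- the "support" set S
  set S : Set CantorSp := ⋃ x ∈ T, emb x '' W with hS
  -- key: emb x '' W is not countable
  have hWuncount : ∀ x : CantorSp, ¬ (emb x '' W).Countable := by
    intro x hc
    have : Cardinal.mk (emb x '' W) ≤ Cardinal.aleph0 :=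
      Cardinal.le_aleph0_iff_set_countable.2 hc
    rw [Cardinal.mk_image_eq (emb_inj x), hW] at this
    exact absurd this (not_le.2 Cardinal.aleph0_lt_aleph_one)
  have hsub : ∀ x ∈ T, emb x '' W ⊆ S := fun x hx => subset_biUnion_of_mem (u := fun x => emb x '' W) hx
  -- the ideal
  refine ⟨{A | ∃ B, A ⊆ B ∧ MeasurableSet[borel CantorSp] B ∧ (B ∩ S).Countable},
    ?_, ?_, ?_, ?_, ?_, ?_, ?_⟩
  · rintro A B hAB ⟨C, hBC, hC, hCc⟩
    exact ⟨C, hAB.trans hBC, hC, hCc⟩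
  · intro f hf
    choose B hB hBm hBc using hf
    refine ⟨⋃ n, B n, Set.iUnion_mono hB, @MeasurableSet.iUnion _ _ (borel CantorSp) _ _ hBm, ?_⟩
    rw [Set.iUnion_inter]
    exact Set.countable_iUnion hBc
  · intro x
    exact ⟨{x}, le_refl _, borel_of_closed isClosed_singleton,
      ((Set.countable_singleton x).mono Set.inter_subset_left)⟩
  · rintro ⟨B, hB, -, hBc⟩
    obtain ⟨x, hx⟩ := hTne
    refine hWuncount x (hBc.mono ?_)
    intro y hy
    exact ⟨hB (mem_univ y), hsub x hx hy⟩
  · rintro A ⟨B, hAB, hBm, hBc⟩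
    exact ⟨B, ⟨B, le_refl _, hBm, hBc⟩, hAB, hBm⟩
  -- (a)
  · -- fibers of proj over points of T
    have hfiber_inj : Function.Injective (fun x : CantorSp => proj ⁻¹' {x}) := by
      intro x x' h
      have hx : emb x (fun _ => 0) ∈ proj ⁻¹' {x} := by
        simp [Set.mem_preimage, proj_emb]
      have h' : proj ⁻¹' {x} = proj ⁻¹' {x'} := h
      rw [h'] at hx
      simpa [Set.mem_preimage, proj_emb] using hx
    have hfiber_notin : ∀ x ∈ T,
        (proj ⁻¹' {x}) ∉ {A | ∃ B, A ⊆ B ∧ MeasurableSet[borel CantorSp] B ∧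
          (B ∩ S).Countable} := by
      rintro x hx ⟨B, hB, -, hBc⟩
      refine hWuncount x (hBc.mono ?_)
      intro y hy
      obtain ⟨z, hz, rfl⟩ := hy
      exact ⟨hB (by simp [Set.mem_preimage, proj_emb]), hsub x hx ⟨z, hz, rfl⟩⟩
    refine ⟨(fun x : CantorSp => proj ⁻¹' {x}) '' T, ?_, ?_, ?_⟩
    · rintro B ⟨x, hx, rfl⟩ B' ⟨x', hx', rfl⟩ hne
      have hxx' : x ≠ x' := fun h => hne (by rw [h])
      exact Set.disjoint_left.2 fun {y} hy hy' =>
        hxx' ((Set.mem_preimage.1 hy).symm.trans (Set.mem_preimage.1 hy'))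
    · rintro B ⟨x, hx, rfl⟩
      exact ⟨borel_of_closed (isClosed_singleton.preimage continuous_proj),
        hfiber_notin x hx⟩
    · rw [Cardinal.mk_image_eq hfiber_inj, hT]
  -- (b)
  · intro F hFd hF
    -- each member of F meets S
    have hpick : ∀ B : F, ∃ y, y ∈ (B : Set CantorSp) ∩ S := by
      rintro ⟨B, hB⟩
      obtain ⟨hBm, hBI⟩ := hF B hB
      by_contra h
      push_neg at h
      exact hBI ⟨B, le_refl _, hBm, by
        have : B ∩ S = ∅ := Set.eq_empty_iff_forall_notMem.2 h
        rw [this]; exact Set.countable_empty⟩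
    choose g hg using hpick
    have hginj : Function.Injective (fun B : F => (⟨g B, (hg B).2⟩ : S)) := by
      intro B B' h
      have hgg : g B = g B' := congrArg Subtype.val h
      by_contra hne
      have hne' : (B : Set CantorSp) ≠ (B' : Set CantorSp) := fun h' =>
        hne (Subtype.ext h')
      have hd : Disjoint (↑B : Set CantorSp) ↑B' := hFd B.2 B'.2 hne'
      exact Set.disjoint_left.1 hd (hg B).1 (hgg ▸ (hg B').1)
    have h1' : Cardinal.mk F ≤ Cardinal.mk S := Cardinal.mk_le_of_injective hginj
    refine h1'.trans ?_
    -- bound mk S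
    have hb := Cardinal.mk_biUnion_le (fun x => emb x '' W) T
    have hsup : (⨆ x : T, Cardinal.mk (emb (x : CantorSp) '' W)) = Cardinal.aleph 1 := by
      have : ∀ x : T, Cardinal.mk (emb (x : CantorSp) '' W) = Cardinal.aleph 1 := fun x => by
        rw [Cardinal.mk_image_eq (emb_inj _), hW]
      simp only [this]
      exact ciSup_const
    rw [hsup, hT] at hb
    refine hb.trans ?_
    rw [Cardinal.mul_eq_max h1.le Cardinal.aleph0_lt_aleph_one.le]
    exact max_le le_rfl haleph1κ
end

section
/- For each n ∈ ℕ there exist N ∈ ℕ and a subset C of 2^N (the group of functions Fin N → ZMod 2 with coordinatewise addition mod 2) such that for all s₀, …, s_{n-1} ∈ 2^N the intersection ⋂_{k<n} (C + s_k) is nonempty, and likewise ⋂_{k<n} ((2^N \ C) + s_k) is nonempty; that is, every n translates of C have nonempty intersection, and the same holds for the complement of C. -/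
open Set

/-- For each `n` there are `N` and `C ⊆ 2^N` such that any `n` translates of `C`
have nonempty intersection, and likewise for the complement of `C`. -/
theorem stmt1 (n : ℕ) :
    ∃ (N : ℕ) (C : Set (Fin N → ZMod 2)),
      ∀ s : Fin n → (Fin N → ZMod 2),
        (⋂ k : Fin n, (fun c => c + s k) '' C).Nonempty ∧
        (⋂ k : Fin n, (fun c => c + s k) '' Cᶜ).Nonempty := by
  classical
  set e : Fin n × Fin n ≃ Fin (n * n) := finProdFinEquiv with he
  refine ⟨n * n, {c | ∀ k : Fin n, ∃ j : Fin n, c (e (k, j)) = 0}, fun s => ?_⟩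
  have hmem : ∀ (S : Set (Fin (n * n) → ZMod 2)) (t z : Fin (n * n) → ZMod 2),
      z + t ∈ S → z ∈ (fun c => c + t) '' S := by
    intro S t z hz
    refine ⟨z + t, hz, ?_⟩
    funext i
    simp [add_assoc, CharTwo.add_self_eq_zero]
  constructor
  · refine ⟨fun i => s (e.symm i).2 i, mem_iInter.2 fun j => ?_⟩
    refine hmem _ _ _ fun k => ⟨j, ?_⟩
    simp [Pi.add_apply, CharTwo.add_self_eq_zero]
  · refine ⟨fun i => s (e.symm i).1 i + 1, mem_iInter.2 fun j => ?_⟩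
    refine hmem _ _ _ ?_
    intro h
    obtain ⟨j', hj'⟩ := h j
    rw [Pi.add_apply] at hj'
    simp only [Equiv.symm_apply_apply] at hj'
    -- value is s j (e (j, j')) + 1 + s j (e (j, j')) = 1
    have : (1 : ZMod 2) = 0 := by
      rw [← hj']; ring_nf
      simp [CharTwo.two_eq_zero]
    exact one_ne_zero this
end

section
/- There exist a strictly increasing sequence of natural numbers 0 = n₀ < n₁ < n₂ < … and sets C_i ⊆ 2^{[n_i, n_{i+1})} (for i ∈ ℕ) such that for all sequences s₀, …, s_{n_i} ∈ 2^{[n_i, n_{i+1})} both ⋂_{k ≤ n_i} (C_i + s_k) and ⋂_{k ≤ n_i} ((2^{[n_i, n_{i+1})} \ C_i) + s_k) are nonempty. -/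
open Set

private def nseq : ℕ → ℕ
  | 0 => 0
  | i + 1 => nseq i + (nseq i + 1) * (nseq i + 2)

private lemma nseq_succ (i : ℕ) :
    nseq (i + 1) = nseq i + (nseq i + 1) * (nseq i + 2) := rfl

/-- There are a strictly increasing sequence `0 = n₀ < n₁ < …` and sets
`C i ⊆ 2^{[nᵢ, nᵢ₊₁)}` such that any `nᵢ + 1` translates of `C i` have nonempty
intersection, and likewise for the complement of `C i`. -/
theorem stmt2 :
    ∃ n : ℕ → ℕ, n 0 = 0 ∧ StrictMono n ∧
      ∃ C : (i : ℕ) → Set (↥(Set.Ico (n i) (n (i + 1))) → ZMod 2),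
        ∀ i : ℕ, ∀ s : Fin (n i + 1) → (↥(Set.Ico (n i) (n (i + 1))) → ZMod 2),
          (⋂ k : Fin (n i + 1), (fun c => c + s k) '' (C i)).Nonempty ∧
          (⋂ k : Fin (n i + 1), (fun c => c + s k) '' (C i)ᶜ).Nonempty := by
  have hz2 : ∀ w : ZMod 2, w + w = 0 := by decide
  have hz1 : ∀ w : ZMod 2, w + 1 + w = 1 := by decide
  refine ⟨nseq, rfl, strictMono_nat_of_lt_succ fun i => ?_, ?_⟩
  · rw [nseq_succ]
    have : 0 < (nseq i + 1) * (nseq i + 2) := Nat.mul_pos (by omega) (by omega)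
    omega
  refine ⟨fun i => {x | ∃ j, j < nseq i + 1 ∧
      ∀ p : ↥(Set.Ico (nseq i) (nseq (i + 1))),
        ((p : ℕ) - nseq i) / (nseq i + 2) = j → x p = 0}, fun i s => ?_⟩
  have hdiv : ∀ p : ↥(Set.Ico (nseq i) (nseq (i + 1))),
      ((p : ℕ) - nseq i) / (nseq i + 2) < nseq i + 1 := fun p => by
    have hp := Set.mem_Ico.mp p.2
    have hb := nseq_succ i
    refine (Nat.div_lt_iff_lt_mul (by omega)).mpr ?_
    omega
  constructor
  · -- intersection of translates of C
    set y : ↥(Set.Ico (nseq i) (nseq (i + 1))) → ZMod 2 :=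
      fun p => s ⟨((p : ℕ) - nseq i) / (nseq i + 2), hdiv p⟩ p with hydef
    refine ⟨y, ?_⟩
    rw [Set.mem_iInter]
    intro k
    refine ⟨y + s k, ⟨(k : ℕ), k.isLt, fun p hp => ?_⟩, ?_⟩
    · have hk : (⟨((p : ℕ) - nseq i) / (nseq i + 2), hdiv p⟩ : Fin (nseq i + 1)) = k :=
        Fin.ext hp
      simp only [Pi.add_apply, hydef]
      rw [hk]
      exact hz2 _
    · funext p
      simp only [Pi.add_apply]
      rw [add_assoc, hz2, add_zero]
  · -- intersection of translates of the complement
    have hlt : ∀ p : ↥(Set.Ico (nseq i) (nseq (i + 1))),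
        min (((p : ℕ) - nseq i) % (nseq i + 2)) (nseq i) < nseq i + 1 := fun p => by omega
    set z : ↥(Set.Ico (nseq i) (nseq (i + 1))) → ZMod 2 :=
      fun p => s ⟨min (((p : ℕ) - nseq i) % (nseq i + 2)) (nseq i), hlt p⟩ p + 1 with hzdef
    refine ⟨z, ?_⟩
    rw [Set.mem_iInter]
    intro k
    refine ⟨z + s k, ?_, ?_⟩
    · rintro ⟨j, hj, hall⟩
      have hkv := k.isLt
      have hb := nseq_succ i
      have hmul : (j + 1) * (nseq i + 2) ≤ (nseq i + 1) * (nseq i + 2) :=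
        Nat.mul_le_mul_right _ (by omega)
      have hmul' : (j + 1) * (nseq i + 2) = j * (nseq i + 2) + (nseq i + 2) := by ring
      have hmem₀ : nseq i + j * (nseq i + 2) + (k : ℕ) ∈ Set.Ico (nseq i) (nseq (i + 1)) := by
        rw [Set.mem_Ico]
        omega
      set p₀ : ↥(Set.Ico (nseq i) (nseq (i + 1))) :=
        ⟨nseq i + j * (nseq i + 2) + (k : ℕ), hmem₀⟩ with hp₀
      have hval : (p₀ : ℕ) = nseq i + j * (nseq i + 2) + (k : ℕ) := rfl
      have hsub : (p₀ : ℕ) - nseq i = (k : ℕ) + j * (nseq i + 2) := by omega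
      have hdiv₀ : ((p₀ : ℕ) - nseq i) / (nseq i + 2) = j := by
        rw [hsub, Nat.add_mul_div_right _ _ (by omega : 0 < nseq i + 2),
          Nat.div_eq_of_lt (by omega : (k : ℕ) < nseq i + 2)]
        exact Nat.zero_add j
      have hmod₀ : ((p₀ : ℕ) - nseq i) % (nseq i + 2) = (k : ℕ) := by
        rw [hsub, Nat.add_mul_mod_self_right]
        exact Nat.mod_eq_of_lt (by omega)
      have hkeq : (⟨min (((p₀ : ℕ) - nseq i) % (nseq i + 2)) (nseq i), hlt p₀⟩ :
          Fin (nseq i + 1)) = k := by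
        apply Fin.ext
        show min (((p₀ : ℕ) - nseq i) % (nseq i + 2)) (nseq i) = (k : ℕ)
        rw [hmod₀]
        omega
      have h0 := hall p₀ hdiv₀
      rw [Pi.add_apply] at h0
      simp only [hzdef] at h0
      rw [hkeq] at h0
      rw [hz1] at h0
      exact one_ne_zero h0
    · funext p
      simp only [Pi.add_apply]
      rw [add_assoc, hz2, add_zero]
end

section
/- Suppose 0 = n₀ < n₁ < n₂ < … is a strictly increasing sequence of natural numbers and C_i ⊆ 2^{[n_i, n_{i+1})} (for i ∈ ℕ) are sets such that for all sequences s₀, …, s_{n_i} ∈ 2^{[n_i, n_{i+1})} both ⋂_{k ≤ n_i} (C_i + s_k) and ⋂_{k ≤ n_i} ((2^{[n_i, n_{i+1})} \ C_i) + s_k) are nonempty. Then the set H = {x ∈ 2^ω : for every i ∈ ℕ, the restriction x↾[n_i, n_{i+1}) belongs to C_i} does not belong to I₀; that is, H is not contained in any countable union of members of F₀. -/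
/-!
Suppose `H ⊆ ⋃ₘ Bₘ` with `Bₘ ∈ F₀`. A perfect set of translations with pairwise disjoint
translates of `Bₘ` has two points agreeing on the first `M` digits, so for every `M` there is a
`d` vanishing on `[0, M)` with `Bₘ ∩ (Bₘ + d) = ∅`. Choose one such `dₜ` for every pair `(m, M)`,
pushed so far to the right that only the first `log₂ (i + 1)` of them are nonzero on the `i`-th
block. Their restrictions to that block span a group `Vᵢ` with at most `nᵢ + 1` elements, so
the hypothesis on `Cᵢ` yields `cᵢ` with `cᵢ + Vᵢ ⊆ Cᵢ`. The product `Q` of the cosets `cᵢ + Vᵢ`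
is a nonempty compact subset of `H` invariant under every `dₜ`. By the Baire category theorem
in `Q`, some `Bₘ` is comeagre in a cylinder of `Q` of some length `M`; translating by the `dₜ`
attached to `(m, M)` preserves that cylinder, so `Bₘ` meets `Bₘ + dₜ`, a contradiction.
-/

open Set MeasureTheory

def cTranslate (B : Set CantorSp) (x : CantorSp) : Set CantorSp := (fun b => b + x) '' B

/-- The family `F₀`. -/
def memF0 (B : Set CantorSp) : Prop :=
  MeasurableSet[borel CantorSp] B ∧
    ∃ P : Set CantorSp, Perfect P ∧ P.Nonempty ∧
      P.Pairwise fun x y => Disjoint (cTranslate B x) (cTranslate B y)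

/-- The σ-ideal `I₀` generated by `F₀`. -/
def memI0 (E : Set CantorSp) : Prop :=
  ∃ f : ℕ → Set CantorSp, (∀ n, memF0 (f n)) ∧ E ⊆ ⋃ n, f n

open PiNat

theorem PiNat.exists_cylinder_subset {E : ℕ → Type*} [∀ n, TopologicalSpace (E n)]
    [∀ n, DiscreteTopology (E n)] {x : ∀ n, E n} {w : Set (∀ n, E n)} (hw : IsOpen w)
    (hx : x ∈ w) : ∃ N, cylinder x N ⊆ w := by
  obtain ⟨_, ⟨y, N, rfl⟩, hxy, hsub⟩ :=
    (isTopologicalBasis_cylinders E).exists_subset_of_mem_open hx hw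
  exact ⟨N, (mem_cylinder_iff_eq.1 hxy).subset.trans hsub⟩

theorem memF0.exists_mem_cylinder_forall_add_notMem {B : Set CantorSp} (hB : memF0 B) (M : ℕ) :
    ∃ d ∈ cylinder 0 M, ∀ z ∈ B, z + d ∉ B := by
  obtain ⟨-, P, hP, ⟨p, hp⟩, hdisj⟩ := hB
  obtain ⟨q, ⟨hqp, hqP⟩, hqp_ne⟩ := accPt_iff_nhds.mp (hP.acc p hp) _
    ((isOpen_cylinder _ p M).mem_nhds (self_mem_cylinder p M))
  refine ⟨p + q, fun i hi => ?_, fun z hz hzd => ?_⟩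
  · simp [hqp i hi, CharTwo.add_self_eq_zero]
  · refine disjoint_left.mp (hdisj hp hqP hqp_ne.symm) ⟨z, hz, rfl⟩ ⟨z + (p + q), hzd, ?_⟩
    show z + (p + q) + q = z + p
    rw [← add_assoc, CharTwo.add_cancel_right]

theorem exists_domRestrict_Ico_eq {α : Type*} [Inhabited α] {n : ℕ → ℕ} (hn : Monotone n)
    (c : ∀ i, Ico (n i) (n (i + 1)) → α) :
    ∃ x : ℕ → α, ∀ i, (Ico (n i) (n (i + 1))).domRestrict x = c i := by
  classical
  refine ⟨fun j => if h : ∃ i, j ∈ Ico (n i) (n (i + 1)) then c h.choose ⟨j, h.choose_spec⟩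
    else default, fun i => funext fun ⟨j, hj⟩ => ?_⟩
  have h : ∃ i, j ∈ Ico (n i) (n (i + 1)) := ⟨i, hj⟩
  have hi : h.choose = i := by
    by_contra hne
    exact disjoint_left.mp (hn.pairwise_disjoint_on_Ico_succ hne) h.choose_spec hj
  have c_congr : ∀ k (hk : j ∈ Ico (n k) (n (k + 1))), k = i → c k ⟨j, hk⟩ = c i ⟨j, hj⟩ := by
    rintro k hk rfl
    rfl
  change dite _ _ _ = _
  rw [dif_pos h]
  exact c_congr _ _ hi

theorem Submodule.natCard_span_range_le {R M ι : Type*} [Semiring R] [Finite R]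
    [AddCommMonoid M] [Module R M] [Fintype ι] (v : ι → M) :
    Nat.card (span R (range v)) ≤ Nat.card R ^ Fintype.card ι := by
  rw [← Fintype.range_linearCombination]
  calc Nat.card (LinearMap.range (Fintype.linearCombination R v))
      = Nat.card (range (Fintype.linearCombination R v)) := rfl
    _ ≤ Nat.card (ι → R) := Finite.card_range_le _
    _ = Nat.card R ^ Fintype.card ι := by rw [Nat.card_fun, Nat.card_eq_fintype_card (α := ι)]

theorem AddSubgroup.exists_forall_add_mem_of_natCard_le {G : Type*} [AddGroup G] {C : Set G}
    {k : ℕ} (hC : ∀ s : Fin (k + 1) → G, (⋂ j, (· + s j) '' C).Nonempty) (V : AddSubgroup G)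
    [Finite V] (hV : Nat.card V ≤ k + 1) : ∃ c, ∀ v ∈ V, c + v ∈ C := by
  let e : V ↪ Fin (k + 1) := (Finite.equivFin V).toEmbedding.trans (Fin.castLEEmb hV)
  have hsurj := Function.invFun_surjective e.injective
  obtain ⟨c, hc⟩ := hC fun j => -((Function.invFun e j : V) : G)
  refine ⟨c, fun v hv => ?_⟩
  obtain ⟨j, hj⟩ := hsurj ⟨v, hv⟩
  obtain ⟨a, ha, hac⟩ := mem_iInter.mp hc j
  rw [hj] at hac
  have hca : c + v = a := eq_add_neg_iff_add_eq.mp hac.symm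
  rwa [hca]

theorem BaireMeasurableSet.exists_isOpen_diff_isMeagre {X : Type*} [TopologicalSpace X]
    {A : Set X} (hA : BaireMeasurableSet A) (hA' : ¬IsMeagre A) :
    ∃ U, IsOpen U ∧ U.Nonempty ∧ IsMeagre (U \ A) := by
  obtain ⟨U, hU, hAU⟩ := hA.residualEq_isOpen
  have hAU' := Filter.eventuallyEq_set.mp hAU
  refine ⟨U, hU, ?_, ?_⟩
  · refine nonempty_iff_ne_empty.mpr fun hU₀ => hA' ?_
    filter_upwards [hAU'] with x hx
    simp_all
  · filter_upwards [hAU'] with x hx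
    simp_all

theorem exists_mem_and_apply_mem_of_isMeagre_diff {X : Type*} [TopologicalSpace X]
    [BaireSpace X] {A U : Set X} (hU : IsOpen U) (hUne : U.Nonempty) (hUA : IsMeagre (U \ A))
    (T : X ≃ₜ X) (hTU : T ⁻¹' U = U) : ∃ y ∈ A, T y ∈ A := by
  by_contra! h
  have hTUA : IsMeagre (T ⁻¹' (U \ A)) := hUA.preimage_of_isOpenMap T.continuous T.isOpenMap
  refine not_isMeagre_of_isOpen hU hUne ((hUA.union hTUA).mono fun y hy => ?_)
  by_cases hyA : y ∈ A
  · have hTy : y ∈ T ⁻¹' U := hTU.symm ▸ hy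
    exact Or.inr ⟨hTy, h y hyA⟩
  · exact Or.inl ⟨hy, hyA⟩

theorem add_mem_cylinder_iff {x d y : CantorSp} {N : ℕ} (hd : d ∈ cylinder 0 N) :
    x + d ∈ cylinder y N ↔ x ∈ cylinder y N := by
  simp only [mem_cylinder_iff, Pi.add_apply]
  exact forall₂_congr fun i hi => by rw [hd i hi, Pi.zero_apply, add_zero]

theorem exists_forall_mem_cylinder_exists_add_mem {Q : Set CantorSp} (hQ : IsClosed Q)
    (hQne : Q.Nonempty) {B : ℕ → Set CantorSp} (hB : ∀ m, MeasurableSet[borel CantorSp] (B m))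
    (hQB : Q ⊆ ⋃ m, B m) :
    ∃ m N, ∀ d ∈ cylinder 0 N, (∀ x ∈ Q, x + d ∈ Q) → ∃ y ∈ B m, y + d ∈ B m := by
  let _ := borel CantorSp
  have : BorelSpace CantorSp := ⟨rfl⟩
  have : CompactSpace Q := isCompact_iff_compactSpace.mp hQ.isCompact
  have : Nonempty Q := hQne.to_subtype
  obtain ⟨m, hm⟩ : ∃ m, ¬IsMeagre (((↑) : Q → CantorSp) ⁻¹' B m) := by
    by_contra! h
    refine not_isMeagre_of_isOpen isOpen_univ univ_nonempty
      ((isMeagre_iUnion h).mono fun y _ => ?_)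
    simpa using hQB y.2
  obtain ⟨U, hU, ⟨q, hqU⟩, hUB⟩ :=
    ((hB m).preimage measurable_subtype_coe).baireMeasurableSet.exists_isOpen_diff_isMeagre hm
  obtain ⟨W, hW, rfl⟩ := isOpen_induced_iff.mp hU
  obtain ⟨N, hN⟩ := exists_cylinder_subset hW hqU
  refine ⟨m, N, fun d hd hQd => ?_⟩
  have hQ_iff : ∀ x, x ∈ Q ↔ x + d ∈ Q := fun x =>
    ⟨hQd x, fun h => CharTwo.add_cancel_right x d ▸ hQd _ h⟩
  obtain ⟨y, hy, hyd⟩ := exists_mem_and_apply_mem_of_isMeagre_diff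
    ((isOpen_cylinder _ (q : CantorSp) N).preimage continuous_subtype_val)
    ⟨q, self_mem_cylinder _ _⟩ (hUB.mono (sdiff_subset_sdiff_left (preimage_mono hN)))
    ((Homeomorph.addRight d).subtype hQ_iff) (ext fun x => add_mem_cylinder_iff hd)
  exact ⟨y, hy, hyd⟩

theorem exists_isClosed_subset_forall_add_mem (n : ℕ → ℕ) (hmono : StrictMono n)
    (C : ∀ i, Set (Ico (n i) (n (i + 1)) → ZMod 2))
    (hC : ∀ i, ∀ s : Fin (n i + 1) → (Ico (n i) (n (i + 1)) → ZMod 2),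
      (⋂ k, (· + s k) '' C i).Nonempty)
    (d : ℕ → CantorSp) (hd : ∀ t, d t ∈ cylinder 0 (n (2 ^ (t + 1)))) :
    ∃ Q : Set CantorSp, IsClosed Q ∧ Q.Nonempty ∧
      Q ⊆ {x | ∀ i, (Ico (n i) (n (i + 1))).domRestrict x ∈ C i} ∧ ∀ t, ∀ x ∈ Q, x + d t ∈ Q := by
  let V i : Submodule (ZMod 2) (Ico (n i) (n (i + 1)) → ZMod 2) :=
    Submodule.span (ZMod 2)
      (range fun t : Fin (Nat.log 2 (i + 1)) => (Ico (n i) (n (i + 1))).domRestrict (d t))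
  have hV i : Nat.card (V i).toAddSubgroup ≤ n i + 1 :=
    calc Nat.card (V i) ≤ 2 ^ Nat.log 2 (i + 1) :=
          (Submodule.natCard_span_range_le _).trans_eq (by rw [Nat.card_zmod, Fintype.card_fin])
      _ ≤ i + 1 := Nat.pow_log_le_self 2 i.succ_ne_zero
      _ ≤ n i + 1 := Nat.succ_le_succ hmono.le_apply
  have hdV t i : (Ico (n i) (n (i + 1))).domRestrict (d t) ∈ V i := by
    by_cases ht : t < Nat.log 2 (i + 1)
    · exact Submodule.subset_span ⟨⟨t, ht⟩, rfl⟩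
    · convert (V i).zero_mem
      funext ⟨j, hj⟩
      refine hd t j (hj.2.trans_le (hmono.monotone ?_))
      have := Nat.lt_pow_succ_log_self one_lt_two (i + 1)
      have := Nat.pow_le_pow_right two_pos (not_lt.mp ht)
      omega
  choose c hc using fun i =>
    AddSubgroup.exists_forall_add_mem_of_natCard_le (hC i) (V i).toAddSubgroup (hV i)
  obtain ⟨x₀, hx₀⟩ := exists_domRestrict_Ico_eq hmono.monotone c
  refine ⟨{x | ∀ i, (Ico (n i) (n (i + 1))).domRestrict x - c i ∈ V i}, ?_,
    ⟨x₀, fun i => by simp [hx₀ i]⟩, fun x hx i => by simpa using hc i _ (hx i),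
    fun t x hx i => ?_⟩
  · simp only [ofPred_forall]
    exact isClosed_iInter fun i =>
      (isClosed_discrete {y | y - c i ∈ V i}).preimage
        (Pi.continuous_domRestrict (A := fun _ => ZMod 2) _)
  · rw [show (Ico (n i) (n (i + 1))).domRestrict (x + d t) - c i =
      ((Ico (n i) (n (i + 1))).domRestrict x - c i) + (Ico (n i) (n (i + 1))).domRestrict (d t)
      from add_sub_right_comm ..]
    exact (V i).add_mem (hx i) (hdV t i)

theorem stmt3_general (n : ℕ → ℕ) (hmono : StrictMono n)
    (C : (i : ℕ) → Set (↥(Set.Ico (n i) (n (i + 1))) → ZMod 2))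
    (hC : ∀ i : ℕ, ∀ s : Fin (n i + 1) → (↥(Set.Ico (n i) (n (i + 1))) → ZMod 2),
      (⋂ k : Fin (n i + 1), (fun c => c + s k) '' (C i)).Nonempty ∧
      (⋂ k : Fin (n i + 1), (fun c => c + s k) '' (C i)ᶜ).Nonempty) :
    ¬ memI0 {x : CantorSp | ∀ i : ℕ, (fun j : ↥(Set.Ico (n i) (n (i + 1))) => x j.1) ∈ C i} := by
  rintro ⟨f, hf, hcov⟩
  choose D hD hfD using fun m M => (hf m).exists_mem_cylinder_forall_add_notMem M
  -- `d (Nat.pair m N)` moves `f m` off itself and vanishes on `[0, N)`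
  let d t := D (Nat.unpair t).1 (max (Nat.unpair t).2 (n (2 ^ (t + 1))))
  obtain ⟨Q, hQ, hQne, hQH, hQd⟩ := exists_isClosed_subset_forall_add_mem n hmono C
    (fun i s => (hC i s).1) d fun t => cylinder_anti _ (le_max_right _ _) (hD _ _)
  obtain ⟨m, N, hmN⟩ := exists_forall_mem_cylinder_exists_add_mem hQ hQne (fun m => (hf m).1)
    (hQH.trans hcov)
  have hdN : d (Nat.pair m N) ∈ cylinder 0 N := by
    simpa [d] using cylinder_anti _ (le_max_left _ _) (hD _ _)
  obtain ⟨y, hy, hyd⟩ := hmN _ hdN (hQd _)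
  exact hfD m _ y hy (by simpa [d] using hyd)

/-- If `0 = n₀ < n₁ < …` and the sets `Cᵢ ⊆ 2^{[nᵢ,nᵢ₊₁)}` are such that any `nᵢ + 1`
translates of `Cᵢ` (and of its complement) have nonempty intersection, then the set
`H = {x ∈ 2^ω : ∀ i, x↾[nᵢ,nᵢ₊₁) ∈ Cᵢ}` is not in `I₀`. -/
theorem stmt3 (n : ℕ → ℕ) (hn0 : n 0 = 0) (hmono : StrictMono n)
    (C : (i : ℕ) → Set (↥(Set.Ico (n i) (n (i + 1))) → ZMod 2))
    (hC : ∀ i : ℕ, ∀ s : Fin (n i + 1) → (↥(Set.Ico (n i) (n (i + 1))) → ZMod 2),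
      (⋂ k : Fin (n i + 1), (fun c => c + s k) '' (C i)).Nonempty ∧
      (⋂ k : Fin (n i + 1), (fun c => c + s k) '' (C i)ᶜ).Nonempty) :
    ¬ memI0 {x : CantorSp | ∀ i : ℕ, (fun j : ↥(Set.Ico (n i) (n (i + 1))) => x j.1) ∈ C i} :=
  stmt3_general n hmono C hC
end

section
/- There exists a continuous function f : 2^ω → 2^ω such that for every x ∈ 2^ω the fiber f⁻¹[{x}] does not belong to I₀, i.e., f⁻¹[{x}] is not contained in any countable union of members of F₀. Consequently, the σ-ideal I₀ has property (M) but does not have property (D). -/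
open Set MeasureTheory

/-!
Cut `ℕ` into consecutive finite blocks and let the `k`-th coordinate of `f x` be `r k`
applied to the `k`-th block of `x`, where `r k` colours `𝔽₂^(L k)` so that for any `k + 1`
vectors and either colour some coset of their span is monochromatic in that colour; a random
colouring does this once `L k` is large, by a union bound.

Suppose a fibre `f⁻¹{z}` is covered by sets `Bₙ ∈ F₀` with perfect sets of translations `Pₙ`.
For every `ℓ` pick `p ≠ q` in `Pₙ`, `n = ℓ.unpair.1`, agreeing up to the start of block `ℓ`,
and set `e ℓ = q - p`. Choosing the monochromatic cosets block by block yields a continuous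
`H y = c + ∑ y ℓ • e ℓ` with values in the fibre. By Baire category some `H⁻¹ Bₙ` is
non-meagre, so by a Pettis-type argument it contains `y` and `y + δ ℓ` for all large `ℓ`,
in particular for some `ℓ` labelled `n`. Then `H y` and `H y + (q - p)` both lie in `Bₙ`, so
`Bₙ + p` and `Bₙ + q` meet. Property (D) fails since a Borel set with a perfect set of
disjoint translates lies in `F₀ ⊆ I₀`.
-/

open Filter Topology Submodule

lemma pow_succ_add_le_succ_pow (a : ℕ) :
    ∀ k, a ^ (k + 1) + (k + 1) * a ^ k ≤ (a + 1) ^ (k + 1)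
  | 0 => by simp
  | k + 1 => by
    have ih := pow_succ_add_le_succ_pow a k
    calc a ^ (k + 2) + (k + 2) * a ^ (k + 1)
        ≤ (a + 1) * (a ^ (k + 1) + (k + 1) * a ^ k) := by
          ring_nf; nlinarith [Nat.zero_le (a ^ k)]
      _ ≤ (a + 1) ^ (k + 2) := by rw [pow_succ' _ (k + 1)]; gcongr

lemma two_mul_pow_le_succ_pow (n : ℕ) : 2 * n ^ (n + 1) ≤ (n + 1) ^ (n + 1) := by
  have := pow_succ_add_le_succ_pow n n
  have : n ^ (n + 1) ≤ (n + 1) * n ^ n := by rw [pow_succ']; gcongr; omega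
  omega

/-- The estimate `(1 - 1/(n+1))^m ≤ 2^(-K)` for `m ≥ (n + 1) K`, cleared of denominators. -/
lemma pow_mul_two_pow_le_succ_pow (n : ℕ) :
    ∀ {K m : ℕ}, (n + 1) * K ≤ m → n ^ m * 2 ^ K ≤ (n + 1) ^ m
  | 0, m, _ => by simpa using Nat.pow_le_pow_left n.le_succ m
  | K + 1, m, h => by
    obtain ⟨m, rfl⟩ : ∃ m', m = m' + (n + 1) :=
      ⟨m - (n + 1), by rw [Nat.sub_add_cancel]; nlinarith⟩
    calc n ^ (m + (n + 1)) * 2 ^ (K + 1) = n ^ m * 2 ^ K * (2 * n ^ (n + 1)) := by ring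
      _ ≤ (n + 1) ^ m * (n + 1) ^ (n + 1) :=
        Nat.mul_le_mul (pow_mul_two_pow_le_succ_pow n (by nlinarith)) (two_mul_pow_le_succ_pow n)
      _ = (n + 1) ^ (m + (n + 1)) := (pow_add ..).symm

section Counting

variable {V α : Type*}

lemma card_forall_ne_const {Q W : Type*} [Finite Q] [Finite W] [Finite α] (b : α) :
    Nat.card {g : Q → W → α // ∀ q, g q ≠ Function.const W b} =
      (Nat.card α ^ Nat.card W - 1) ^ Nat.card Q := by
  classical
  have := Fintype.ofFinite Q; have := Fintype.ofFinite W; have := Fintype.ofFinite α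
  rw [Nat.card_congr (Equiv.subtypePiEquivPi (p := fun _ f => f ≠ Function.const W b)),
    Nat.card_pi]
  simp only [Nat.card_eq_fintype_card, Fintype.card_subtype_compl, Fintype.card_subtype_eq,
    Fintype.card_fun, Finset.prod_const, Finset.card_univ]

lemma card_forall_exists_ne_le [AddGroup V] [Finite V] [Finite α] (W : AddSubgroup V) (b : α) :
    Nat.card {r : V → α // ∀ c, ∃ w ∈ W, r (c + w) ≠ b} ≤
      (Nat.card α ^ Nat.card W - 1) ^ Nat.card (V ⧸ W) := by
  rw [← card_forall_ne_const]
  refine Nat.card_le_card_of_injective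
    (fun r => ⟨fun t w => r.1 (t.out + w), fun t h => ?_⟩) fun r r' h => ?_
  · obtain ⟨w, hw, hne⟩ := r.2 t.out
    exact hne (congrFun h ⟨w, hw⟩)
  · ext x
    have hx : -(QuotientAddGroup.mk x : V ⧸ W).out + x ∈ W :=
      QuotientAddGroup.eq.mp (QuotientAddGroup.out_eq' _)
    simpa using congrFun (congrFun (congrArg Subtype.val h) (QuotientAddGroup.mk x)) ⟨_, hx⟩

lemma card_span_range_le {R ι : Type*} [Ring R] [Finite R] [AddCommGroup V] [Module R V]
    [Finite ι] (v : ι → V) : Nat.card (span R (range v)) ≤ Nat.card R ^ Nat.card ι := by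
  have := Fintype.ofFinite ι
  rw [← Nat.card_fun]
  refine Nat.card_le_card_of_surjective
    (fun ε => ⟨∑ i, ε i • v i, sum_mem fun i _ => smul_mem _ _ (subset_span ⟨i, rfl⟩)⟩) ?_
  rintro ⟨x, hx⟩
  obtain ⟨ε, rfl⟩ := mem_span_range_iff_exists_fun R |>.mp hx
  exact ⟨ε, rfl⟩

end Counting

def HasMonochromaticCosets {V : Type*} [AddCommGroup V] [Module (ZMod 2) V] (d : ℕ)
    (r : V → ZMod 2) : Prop :=
  ∀ (v : Fin d → V) (b : ZMod 2), ∃ c, ∀ w ∈ span (ZMod 2) (range v), r (c + w) = b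

lemma card_forall_exists_span_ne_mul_le {L d : ℕ}
    (hL : 2 ^ 2 ^ d * (L * d + 2) * 2 ^ d ≤ 2 ^ L) (v : Fin d → Fin L → ZMod 2) (b : ZMod 2) :
    Nat.card {r : (Fin L → ZMod 2) → ZMod 2 // ∀ c, ∃ w ∈ span (ZMod 2) (range v), r (c + w) ≠ b}
      * 2 ^ (L * d + 2) ≤ 2 ^ 2 ^ L := by
  set W := (span (ZMod 2) (range v)).toAddSubgroup
  have hcard : Nat.card (Fin L → ZMod 2) = Nat.card ((Fin L → ZMod 2) ⧸ W) * Nat.card W :=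
    W.card_eq_card_quotient_mul_card_addSubgroup
  have hW : Nat.card W ≤ 2 ^ d := by
    have := card_span_range_le (R := ZMod 2) v
    rwa [Nat.card_zmod, Nat.card_fin] at this
  have hq : (2 ^ Nat.card W - 1 + 1) * (L * d + 2) ≤ Nat.card ((Fin L → ZMod 2) ⧸ W) := by
    rw [Nat.sub_add_cancel Nat.one_le_two_pow]
    refine Nat.le_of_mul_le_mul_right ?_ (Nat.card_pos (α := W))
    calc 2 ^ Nat.card W * (L * d + 2) * Nat.card W ≤ 2 ^ 2 ^ d * (L * d + 2) * 2 ^ d := by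
          gcongr; norm_num
      _ ≤ Nat.card (Fin L → ZMod 2) := by simpa using hL
      _ = _ := hcard
  calc _ ≤ (2 ^ Nat.card W - 1) ^ Nat.card ((Fin L → ZMod 2) ⧸ W) * 2 ^ (L * d + 2) := by
        gcongr
        have := card_forall_exists_ne_le W b
        rwa [Nat.card_zmod] at this
    _ ≤ (2 ^ Nat.card W) ^ Nat.card ((Fin L → ZMod 2) ⧸ W) := by
        simpa [Nat.sub_add_cancel Nat.one_le_two_pow] using pow_mul_two_pow_le_succ_pow _ hq
    _ = 2 ^ 2 ^ L := by rw [← pow_mul, mul_comm, ← hcard]; simp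

lemma exists_hasMonochromaticCosets {L d : ℕ} (hL : 2 ^ 2 ^ d * (L * d + 2) * 2 ^ d ≤ 2 ^ L) :
    ∃ r : (Fin L → ZMod 2) → ZMod 2, HasMonochromaticCosets d r := by
  by_contra! hr
  have hcover : Function.Surjective fun x : Σ p : (Fin d → Fin L → ZMod 2) × ZMod 2,
      {r : (Fin L → ZMod 2) → ZMod 2 // ∀ c, ∃ w ∈ span (ZMod 2) (range p.1), r (c + w) ≠ p.2} =>
      x.2.1 := by
    intro r
    have := hr r
    simp only [HasMonochromaticCosets, not_forall, not_exists] at this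
    obtain ⟨v, b, hvb⟩ := this
    exact ⟨⟨(v, b), r, fun c => by simpa using hvb c⟩, rfl⟩
  have key : 2 ^ 2 ^ L * 2 ^ (L * d + 2) ≤ 2 ^ 2 ^ L * 2 ^ (L * d + 1) := calc
    2 ^ 2 ^ L * 2 ^ (L * d + 2) = Nat.card ((Fin L → ZMod 2) → ZMod 2) * 2 ^ (L * d + 2) := by
      simp
    _ ≤ (∑ p : (Fin d → Fin L → ZMod 2) × ZMod 2, Nat.card
          {r : (Fin L → ZMod 2) → ZMod 2 // ∀ c, ∃ w ∈ span (ZMod 2) (range p.1), r (c + w) ≠ p.2})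
          * 2 ^ (L * d + 2) := by
        rw [← Nat.card_sigma]; gcongr; exact Nat.card_le_card_of_surjective _ hcover
    _ ≤ ∑ _p : (Fin d → Fin L → ZMod 2) × ZMod 2, 2 ^ 2 ^ L := by
        rw [Finset.sum_mul]; gcongr with p; exact card_forall_exists_span_ne_mul_le hL p.1 p.2
    _ = 2 ^ 2 ^ L * 2 ^ (L * d + 1) := by simp [pow_succ, pow_mul, mul_comm]
  exact (Nat.pow_lt_pow_right one_lt_two (Nat.lt_succ_self _)).not_ge
    (Nat.le_of_mul_le_mul_left key (by positivity))

lemma exists_pos_hasMonochromaticCosets (d : ℕ) :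
    ∃ L, 0 < L ∧ ∃ r : (Fin L → ZMod 2) → ZMod 2, HasMonochromaticCosets d r := by
  set s := 2 ^ d + 2 * d + 1
  refine ⟨2 ^ (s + 1), by positivity, exists_hasMonochromaticCosets ?_⟩
  have hd : d + 2 ≤ 2 ^ (d + 1) := Nat.lt_two_pow_self
  have hs : 2 * s + 1 ≤ 2 ^ (s + 1) := by
    have := Nat.lt_two_pow_self (n := s); rw [pow_succ]; omega
  calc 2 ^ 2 ^ d * (2 ^ (s + 1) * d + 2) * 2 ^ d
      ≤ 2 ^ 2 ^ d * (2 ^ (s + 1) * 2 ^ (d + 1)) * 2 ^ d := by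
        gcongr; nlinarith [Nat.one_le_two_pow (n := s + 1)]
    _ = 2 ^ (2 * s + 1) := by rw [← pow_add, ← pow_add, ← pow_add]; congr 1; omega
    _ ≤ 2 ^ 2 ^ (s + 1) := Nat.pow_le_pow_right two_pos hs

theorem BaireMeasurableSet.eventually_exists_add_mem {G : Type*} [TopologicalSpace G]
    [AddGroup G] [IsTopologicalAddGroup G] [BaireSpace G] {A : Set G}
    (hA : BaireMeasurableSet A) (hA' : ¬IsMeagre A) : ∀ᶠ v in 𝓝 0, ∃ y ∈ A, y + v ∈ A := by
  obtain ⟨U, hU, hAU⟩ := hA.residualEq_isOpen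
  obtain ⟨x, hx⟩ : U.Nonempty := by
    rw [nonempty_iff_ne_empty]
    rintro rfl
    exact hA' (eventuallyEq_empty.1 hAU)
  have hxv : ∀ᶠ v in 𝓝 (0 : G), x - v ∈ U :=
    ((continuous_const.sub continuous_id).tendsto' 0 x (sub_zero x)).eventually (hU.mem_nhds hx)
  filter_upwards [hxv] with v hv
  have hshift : (· + v) ⁻¹' A =ᵇ (· + v) ⁻¹' U := hAU.comp_tendsto
    (tendsto_residual_of_isOpenMap (continuous_add_const v) (isOpenMap_add_right v))
  by_contra! hempty
  refine not_isMeagre_of_isOpen (hU.inter (hU.preimage (continuous_add_const v)))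
    ⟨x - v, hv, by simpa using hx⟩ (eventuallyEq_empty.1 ?_)
  refine (hAU.inter hshift).symm.trans (eventuallyEq_empty.2 (Eventually.of_forall ?_))
  rintro y ⟨hy, hyv⟩
  exact hempty y hy hyv

lemma tendsto_pi_single_atTop {α : Type*} [Zero α] [TopologicalSpace α] (a : α) :
    Tendsto (fun ℓ : ℕ => (Pi.single ℓ a : ℕ → α)) atTop (𝓝 0) :=
  tendsto_pi_nhds.2 fun i => tendsto_const_nhds.congr' <|
    (eventually_gt_atTop i).mono fun _ h => by simp [h.ne]

lemma add_sub_notMem_of_disjoint_cTranslate {B : Set CantorSp} {p q x : CantorSp}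
    (h : Disjoint (cTranslate B p) (cTranslate B q)) (hx : x ∈ B) : x + (q - p) ∉ B :=
  fun hx' => disjoint_left.1 h ⟨_, hx', by simp [add_assoc]⟩ ⟨x, hx, rfl⟩

theorem not_memI0_of_forall_exists_affine {E : Set CantorSp} (N : ℕ → ℕ)
    (hE : ∀ e : ℕ → CantorSp, (∀ j i, i < N j → e j i = 0) → ∃ H : CantorSp → CantorSp,
      Continuous H ∧ range H ⊆ E ∧ ∀ y ℓ, H (y + Pi.single ℓ 1) = H y + e ℓ) :
    ¬ memI0 E := by
  rintro ⟨B, hB, hEB⟩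
  choose hBm P hP hPne hPdisj using hB
  have hpair : ∀ ℓ, ∃ p ∈ P ℓ.unpair.1, ∃ q ∈ P ℓ.unpair.1,
      p ≠ q ∧ q ∈ PiNat.cylinder p (N ℓ) := by
    intro ℓ
    obtain ⟨p, hp⟩ := hPne ℓ.unpair.1
    obtain ⟨q, ⟨hqc, hq⟩, hqp⟩ := accPt_iff_nhds.1 ((hP _).acc p hp) _
      ((PiNat.isOpen_cylinder _ p (N ℓ)).mem_nhds (PiNat.self_mem_cylinder p (N ℓ)))
    exact ⟨p, hp, q, hq, hqp.symm, hqc⟩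
  choose p hp q hq hpq hcyl using hpair
  obtain ⟨H, hH, hHE, hHadd⟩ := hE (fun ℓ => q ℓ - p ℓ) fun j i hi => by
    simp [PiNat.mem_cylinder_iff.1 (hcyl j) i hi]
  obtain ⟨n, hn⟩ : ∃ n, ¬IsMeagre (H ⁻¹' B n) := by
    by_contra! h
    refine not_isMeagre_of_isOpen isOpen_univ univ_nonempty ((isMeagre_iUnion h).mono ?_)
    rintro y -
    simpa using hEB (hHE (mem_range_self y))
  have hBaire : BaireMeasurableSet (H ⁻¹' B n) :=
    ((hBm n).preimage hH.borel_measurable).eventuallyMeasurableSet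
  obtain ⟨m, hm⟩ := eventually_atTop.1 <|
    (tendsto_pi_single_atTop (1 : ZMod 2)).eventually (hBaire.eventually_exists_add_mem hn)
  obtain ⟨y, hy, hy'⟩ := hm (Nat.pair n m) (Nat.right_le_pair n m)
  have hdisj := hPdisj (Nat.pair n m).unpair.1 (hp _) (hq _) (hpq _)
  rw [Nat.unpair_pair] at hdisj
  exact add_sub_notMem_of_disjoint_cTranslate hdisj hy (by simpa [hHadd] using hy')

section Blocks

variable (L : ℕ → ℕ)

def blockStart (k : ℕ) : ℕ := ∑ i ∈ Finset.range k, L i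

def block {α : Type*} (k : ℕ) (x : ℕ → α) : Fin (L k) → α := fun t => x (blockStart L k + t)

variable {L}

lemma blockStart_add_lt_blockStart {k k' : ℕ} (h : k < k') (t : Fin (L k)) :
    blockStart L k + t < blockStart L k' :=
  calc blockStart L k + t < blockStart L (k + 1) := by
        rw [blockStart, blockStart, Finset.sum_range_succ]; exact Nat.add_lt_add_left t.2 _
    _ ≤ blockStart L k' := Finset.sum_le_sum_of_subset (Finset.range_subset_range.2 h)

lemma self_le_blockStart (hL : ∀ k, 0 < L k) (k : ℕ) : k ≤ blockStart L k := by
  simpa [blockStart] using Finset.card_nsmul_le_sum (Finset.range k) L 1 fun i _ => hL i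

lemma injective_blockStart_add :
    Function.Injective fun x : Σ k, Fin (L k) => blockStart L x.1 + x.2 := by
  rintro ⟨k, t⟩ ⟨k', t'⟩ h
  dsimp only at h
  obtain rfl : k = k' := by
    by_contra hne
    rcases Nat.lt_or_gt_of_ne hne with hlt | hlt
    · have := blockStart_add_lt_blockStart hlt t; omega
    · have := blockStart_add_lt_blockStart hlt t'; omega
  obtain rfl : t = t' := Fin.ext (by omega)
  rfl

lemma surjective_block {α : Type*} [Nonempty α] :
    Function.Surjective fun (x : ℕ → α) k => block L k x := by
  intro c
  obtain ⟨x, hx⟩ :=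
    injective_blockStart_add.surjective_comp_right fun p : Σ k, Fin (L k) => c p.1 p.2
  exact ⟨x, funext fun k => funext fun t => congrFun hx ⟨k, t⟩⟩

end Blocks

section AffineSeries

variable {R : Type*} [CommSemiring R]

/-- `y ↦ c + ∑ j, y j • e j`, with the sum at coordinate `i` cut off at `j ≤ i`; this is the
whole sum as long as `e j` vanishes below `j`. -/
def affineSeries (c : ℕ → R) (e : ℕ → ℕ → R) (y : ℕ → R) : ℕ → R :=
  fun i => c i + ∑ j ∈ Finset.range (i + 1), y j * e j i

lemma continuous_affineSeries [TopologicalSpace R] [IsTopologicalSemiring R] (c : ℕ → R)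
    (e : ℕ → ℕ → R) : Continuous (affineSeries c e) := by
  unfold affineSeries
  fun_prop

lemma affineSeries_add_single {e : ℕ → ℕ → R} (he : ∀ j i, i < j → e j i = 0) (c y : ℕ → R)
    (ℓ : ℕ) : affineSeries c e (y + Pi.single ℓ 1) = affineSeries c e y + e ℓ := by
  funext i
  simp only [affineSeries, Pi.add_apply, add_mul, Finset.sum_add_distrib, Pi.single_apply,
    ite_mul, one_mul, zero_mul, Finset.sum_ite_eq', Finset.mem_range, add_assoc]
  split_ifs with h
  · rfl
  · rw [he ℓ i (by omega)]

lemma block_affineSeries {L : ℕ → ℕ} (hL : ∀ k, 0 < L k) {e : ℕ → ℕ → R}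
    (he : ∀ j i, i < blockStart L j → e j i = 0) (c y : ℕ → R) (k : ℕ) :
    block L k (affineSeries c e y) = block L k c + ∑ j : Fin (k + 1), y j • block L k (e j) := by
  funext t
  simp only [block, affineSeries, Pi.add_apply, Finset.sum_apply, Pi.smul_apply, smul_eq_mul]
  rw [Fin.sum_univ_eq_sum_range (fun j => y j * e j (blockStart L k + t))]
  congr 1
  refine (Finset.sum_subset (Finset.range_subset_range.2 ?_) fun j _ hjk => ?_).symm
  · have := self_le_blockStart hL k; omega
  · rw [he j _ (blockStart_add_lt_blockStart (by simp at hjk; omega) t), mul_zero]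

end AffineSeries

section BlockMap

variable {L : ℕ → ℕ} (r : ∀ k, (Fin (L k) → ZMod 2) → ZMod 2)

def blockMap (x : CantorSp) : CantorSp := fun k => r k (block L k x)

lemma continuous_blockMap : Continuous (blockMap r) :=
  continuous_pi fun _ =>
    continuous_of_discreteTopology.comp (continuous_pi fun _ => continuous_apply _)

theorem not_memI0_preimage_blockMap (hL : ∀ k, 0 < L k)
    (hr : ∀ k, HasMonochromaticCosets (k + 1) (r k)) (z : CantorSp) :
    ¬ memI0 (blockMap r ⁻¹' {z}) := by
  refine not_memI0_of_forall_exists_affine (blockStart L) fun e he => ?_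
  choose c hc using fun k => hr k (fun j => block L k (e j)) (z k)
  obtain ⟨c, rfl⟩ := surjective_block c
  refine ⟨affineSeries c e, continuous_affineSeries c e, ?_, affineSeries_add_single
    (fun j i hij => he j i (hij.trans_le (self_le_blockStart hL j))) c⟩
  rintro _ ⟨y, rfl⟩
  funext k
  rw [blockMap, block_affineSeries hL he]
  exact hc k _ (sum_mem fun j _ => smul_mem _ _ (subset_span ⟨j, rfl⟩))

end BlockMap

/-- There is a continuous `f : 2^ω → 2^ω` all of whose fibers are `I₀`-positive;
consequently `I₀` has property (M) and does not have property (D). -/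
theorem stmt4 :
    (∃ f : CantorSp → CantorSp, Continuous f ∧ ∀ x : CantorSp, ¬ memI0 (f ⁻¹' {x})) ∧
    -- property (M) for `I₀`
    (∃ f : CantorSp → CantorSp, @Measurable CantorSp CantorSp (borel CantorSp) (borel CantorSp) f ∧
      ∀ x : CantorSp, ¬ memI0 (f ⁻¹' {x})) ∧
    -- `I₀` does not have property (D)
    ¬ ∃ B : Set CantorSp, MeasurableSet[borel CantorSp] B ∧ ¬ memI0 B ∧
      ∃ P : Set CantorSp, Perfect P ∧ P.Nonempty ∧
        P.Pairwise fun x y => Disjoint (cTranslate B x) (cTranslate B y) := by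
  choose L hL r hr using fun k => exists_pos_hasMonochromaticCosets (k + 1)
  have hfibre := not_memI0_preimage_blockMap r hL hr
  refine ⟨⟨blockMap r, continuous_blockMap r, hfibre⟩,
    ⟨blockMap r, (continuous_blockMap r).borel_measurable, hfibre⟩, ?_⟩
  rintro ⟨B, hB, hBI, P, hP, hPne, hdisj⟩
  exact hBI ⟨fun _ => B, fun _ => ⟨hB, P, hP, hPne, hdisj⟩, subset_iUnion (fun _ => B) 0⟩
end

section
/- If B ⊆ 2^ω is a Borel set and there exists a perfect set P ⊆ 2^ω such that the translates B + x, x ∈ P, are pairwise disjoint, then B has Haar measure zero (i.e., measure zero with respect to the product of the uniform measures on ZMod 2) and B is meager in 2^ω. Consequently, the σ-ideal I₀ generated by such sets is a proper (non-trivial) ideal. -/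
open Set MeasureTheory TopologicalSpace

/-- The Haar probability measure of the Cantor group, i.e. the product of the uniform
measures on `ZMod 2`. -/
noncomputable def cantorHaar : Measure CantorSp :=
  Measure.addHaarMeasure (⊤ : PositiveCompacts CantorSp)

/-!
A nonempty perfect set `P` is infinite, so the translates `B + x`, `x ∈ P`, are infinitely many
pairwise disjoint sets of measure `μ B` in a space of finite measure: `μ B = 0`. For category we
use Pettis' theorem: a non-meagre set `B` with the Baire property meets `B - t` for all `t` near
`0`. If `x ∈ P` and `y ∈ P` is a different point close to `x`, then `z ∈ B ∩ (B - (x - y))` gives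
`z + x ∈ (B + x) ∩ (B + y)`. Finally `I₀` is proper because `2^ω` is a Baire space.
-/

open Filter Topology

theorem isMeagre_congr {X : Type*} [TopologicalSpace X] {s t : Set X}
    (h : s =ᶠ[residual X] t) : IsMeagre s ↔ IsMeagre t :=
  eventually_congr (h.mono fun _ hx => not_congr (iff_of_eq hx))

section Translates

variable {G : Type*} [AddGroup G]

theorem measure_eq_zero_of_pairwise_disjoint_translates [MeasurableSpace G] [MeasurableAdd G]
    {μ : Measure G} [IsFiniteMeasure μ] [μ.IsAddRightInvariant] {B : Set G}
    (hB : MeasurableSet B) {P : Set G} (hP : P.Infinite)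
    (hdisj : P.Pairwise fun x y => Disjoint ((· + x) '' B) ((· + y) '' B)) : μ B = 0 := by
  by_contra hμB
  have hmeas (x : G) : μ ((· + x) '' B) = μ B := by
    rw [image_add_right, measure_preimage_add_right]
  have hfinite : {x : P | μ B ≤ μ ((· + (x : G)) '' B)}.Finite :=
    μ.finite_const_le_meas_of_disjoint_iUnion (pos_iff_ne_zero.2 hμB)
      (fun x => by rw [image_add_right]; exact hB.preimage (measurable_add_const _))
      (fun x y hxy => hdisj x.2 y.2 (Subtype.coe_injective.ne hxy)) (measure_ne_top _ _)
  simp only [hmeas, le_refl, ofPred_true] at hfinite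
  exact hP (finite_coe_iff.1 (finite_univ_iff.1 hfinite))

variable [TopologicalSpace G] [IsTopologicalAddGroup G] [BaireSpace G]

theorem BaireMeasurableSet.eventually_nhds_zero_exists_add_mem {B : Set G}
    (hB : BaireMeasurableSet B) (hB' : ¬ IsMeagre B) : ∀ᶠ t in 𝓝 0, ∃ z ∈ B, z + t ∈ B := by
  obtain ⟨U, hU, hBU⟩ := hB.residualEq_isOpen
  obtain ⟨a, ha⟩ := nonempty_of_not_isMeagre ((isMeagre_congr hBU).not.1 hB')
  have hnear : ∀ᶠ t in 𝓝 0, a + t ∈ U :=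
    (continuous_const_add a).tendsto' 0 a (add_zero a) |>.eventually (hU.mem_nhds ha)
  filter_upwards [hnear] with t ht
  have hshift : (· + t) ⁻¹' B =ᶠ[residual G] (· + t) ⁻¹' U :=
    hBU.comp_tendsto <|
      tendsto_residual_of_isOpenMap (continuous_add_const t) (isOpenMap_add_right t)
  have hUU : ¬ IsMeagre (U ∩ (· + t) ⁻¹' U) :=
    not_isMeagre_of_isOpen (hU.inter (hU.preimage (continuous_add_const t))) ⟨a, ha, ht⟩
  exact nonempty_of_not_isMeagre ((isMeagre_congr (hBU.inter hshift)).not.2 hUU)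

theorem isMeagre_of_perfect_pairwise_disjoint_translates {B : Set G} (hB : BaireMeasurableSet B)
    {P : Set G} (hP : Perfect P) (hne : P.Nonempty)
    (hdisj : P.Pairwise fun x y => Disjoint ((· + x) '' B) ((· + y) '' B)) : IsMeagre B := by
  by_contra hB'
  obtain ⟨x, hx⟩ := hne
  have hclose : ∀ᶠ y in 𝓝 x, ∃ z ∈ B, z + (x - y) ∈ B :=
    ((continuous_sub_left x).tendsto' x 0 (sub_self x)).eventually
      (hB.eventually_nhds_zero_exists_add_mem hB')
  obtain ⟨y, ⟨hyx, hy⟩, z, hz, hzt⟩ :=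
    ((accPt_iff_frequently.1 (hP.acc x hx)).and_eventually hclose).exists
  exact disjoint_left.1 (hdisj hx hy hyx.symm) ⟨z, hz, rfl⟩
    ⟨z + (x - y), hzt, by simp only [add_assoc, sub_add_cancel]⟩

end Translates

instance : cantorHaar.IsAddHaarMeasure := Measure.isAddHaarMeasure_addHaarMeasure _

theorem memF0.cantorHaar_eq_zero_and_isMeagre {B : Set CantorSp} (h : memF0 B) :
    cantorHaar B = 0 ∧ IsMeagre B := by
  obtain ⟨hB, P, hP, ⟨x, hx⟩, hdisj⟩ := h
  rw [← BorelSpace.measurable_eq] at hB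
  exact ⟨measure_eq_zero_of_pairwise_disjoint_translates hB
      (Set.Infinite.of_accPt (hP.acc x hx)) hdisj,
    isMeagre_of_perfect_pairwise_disjoint_translates hB.baireMeasurableSet hP ⟨x, hx⟩ hdisj⟩

/-- Every Borel set `B ⊆ 2^ω` with a perfect set of translations making its translates
pairwise disjoint has Haar measure zero and is meager; consequently the σ-ideal `I₀`
generated by such sets is proper. -/
theorem stmt5 :
    (∀ B : Set CantorSp, MeasurableSet[borel CantorSp] B →
      (∃ P : Set CantorSp, Perfect P ∧ P.Nonempty ∧
        P.Pairwise fun x y => Disjoint (cTranslate B x) (cTranslate B y)) →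
      cantorHaar B = 0 ∧ IsMeagre B) ∧
    ¬ memI0 (Set.univ : Set CantorSp) := by
  refine ⟨fun B hB hP => memF0.cantorHaar_eq_zero_and_isMeagre ⟨hB, hP⟩, ?_⟩
  rintro ⟨f, hf, hcover⟩
  exact not_isMeagre_of_isOpen isOpen_univ univ_nonempty
    ((isMeagre_iUnion fun n => (hf n).cantorHaar_eq_zero_and_isMeagre.2).mono hcover)
end

section
/- For every countable ordinal α, the space ⟨A_α, τ_α⟩ is a Baire space: the intersection of countably many dense open subsets of A_α in the topology τ_α is dense. In fact, each nonempty basic τ_α-open set U(n,T) is not τ_α-meager. -/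
open Set

/-- A subtree of `ω^{<ω}`: a set of finite sequences of naturals closed under
initial segments (prefixes). -/
def IsTree (T : Set (List ℕ)) : Prop := ∀ s ∈ T, ∀ t : List ℕ, t <+: s → t ∈ T

/-- `T` has an infinite branch. -/
def HasInfiniteBranch (T : Set (List ℕ)) : Prop :=
  ∃ x : ℕ → ℕ, ∀ n : ℕ, (List.range n).map x ∈ T

/-- A well-founded tree: a subtree of `ω^{<ω}` with no infinite branch. -/
def IsWFTree (T : Set (List ℕ)) : Prop := IsTree T ∧ ¬ HasInfiniteBranch T

/-- The child relation of `T`: `childRel T s t` iff `s = t⌢⟨m⟩ ∈ T` for some `m`. -/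
def childRel (T : Set (List ℕ)) (s t : List ℕ) : Prop := s ∈ T ∧ ∃ m : ℕ, s = t ++ [m]

/-- The canonical rank function of a well-founded tree:
`h_T ν = sup { h_T (ν⌢⟨m⟩) + 1 : ν⌢⟨m⟩ ∈ T }`. -/
noncomputable def treeRank (T : Set (List ℕ)) (ν : List ℕ) : Ordinal :=
  @dite _ (WellFounded (childRel T)) (Classical.dec _) (fun h => (h.apply ν).rank) (fun _ => 0)

/-- `A_α`: the well-founded trees containing `⟨⟩` whose canonical rank at `⟨⟩` is `α`. -/
def Atree (α : Ordinal) : Set (Set (List ℕ)) :=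
  {T | IsWFTree T ∧ [] ∈ T ∧ treeRank T [] = α}

/-- `n^{≤ n}`: the finite sequences of length at most `n` with all entries `< n`. -/
def seqBelow (n : ℕ) : Set (List ℕ) := {l | l.length ≤ n ∧ ∀ x ∈ l, x < n}

/-- The basic τ_α-open set `U(n,T)` determined by `n ∈ ℕ` and `T ∈ A_α`. -/
def Unbhd (α : Ordinal) (n : ℕ) (T : ↥(Atree α)) : Set (↥(Atree α)) :=
  {T' | T'.1 ∩ seqBelow n = T.1 ∩ seqBelow n ∧
    ∀ ν ∈ T.1 ∩ seqBelow n, treeRank T'.1 ν = treeRank T.1 ν}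

/-- The topology `τ_α` on `A_α`, generated by the sets `U(n,T)`. -/
def tauTop (α : Ordinal) : TopologicalSpace ↥(Atree α) :=
  TopologicalSpace.generateFrom {s | ∃ (n : ℕ) (T : ↥(Atree α)), s = Unbhd α n T}

/-!
A tree `T ∈ A_α` is coded by `ν ↦ some (h_T ν)` for `ν ∈ T` and `ν ↦ none` otherwise, a point of
the product of copies of the discrete set `Option [0, α]` indexed by `ω^{<ω}`. Since the finite
sets `n^{≤n}` exhaust `ω^{<ω}`, the coding is an embedding for `τ_α`. Its image consists of the
codes with root label `α` whose labels drop strictly from a node to each child and which, at a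
node labelled `γ`, have for every `β < γ` a child labelled at least `β`. The first two conditions
are clopen and the last is open; as `[0, α]` is countable, the image is a Gδ. A Gδ subset of a
completely metrizable space is Baire, being a dense Gδ in its closure, and nonempty open subsets
of a Baire space are not meagre.
-/

open Topology TopologicalSpace

theorem IsGδ.baireSpace_of_isCompletelyPseudoMetrizableSpace {X : Type*} [TopologicalSpace X]
    [IsCompletelyPseudoMetrizableSpace X] {s : Set X} (hs : IsGδ s) : BaireSpace s := by
  have : IsCompletelyPseudoMetrizableSpace (closure s) :=
    isClosed_closure.isCompletelyPseudoMetrizableSpace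
  have : BaireSpace ((↑) ⁻¹' s : Set (closure s)) :=
    (hs.preimage continuous_subtype_val).baireSpace_of_dense
      (by simp [Subtype.dense_iff, inter_eq_right.mpr subset_closure])
  let e : ((↑) ⁻¹' s : Set (closure s)) ≃ₜ s :=
    ⟨⟨fun x => ⟨x, x.2⟩, fun x => ⟨⟨x, subset_closure x.2⟩, x.2⟩, fun _ => rfl, fun _ => rfl⟩,
      by fun_prop, by fun_prop⟩
  exact e.baireSpace

theorem Topology.IsEmbedding.baireSpace_of_isGδ_range {X Y : Type*} [TopologicalSpace X]
    [TopologicalSpace Y] [IsCompletelyPseudoMetrizableSpace Y] {f : X → Y}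
    (hf : IsEmbedding f) (hrange : IsGδ (range f)) : BaireSpace X :=
  have := hrange.baireSpace_of_isCompletelyPseudoMetrizableSpace
  hf.toHomeomorph.symm.baireSpace

theorem IsTree.of_append_singleton {T : Set (List ℕ)} (h : ∀ s m, s ++ [m] ∈ T → s ∈ T) :
    IsTree T := by
  intro s
  induction s using List.reverseRecOn with
  | nil =>
    intro _ t ht
    rwa [List.prefix_nil.mp ht]
  | append_singleton l m ih =>
    intro hs t ht
    rcases le_or_gt t.length l.length with hle | hlt
    · exact ih (h _ _ hs) t ((List.isPrefix_append_of_length hle).mp ht)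
    · rwa [ht.eq_of_length (le_antisymm ht.length_le (by simpa using hlt))]

theorem IsTree.mem_of_append_singleton {T : Set (List ℕ)} (hT : IsTree T) {s : List ℕ} {m : ℕ}
    (h : s ++ [m] ∈ T) : s ∈ T :=
  hT _ h s (List.prefix_append _ _)

theorem hasInfiniteBranch_iff_exists_descending_chain {T : Set (List ℕ)} (hT : IsTree T) :
    HasInfiniteBranch T ↔ ∃ f : ℕ → List ℕ, ∀ n, childRel T (f (n + 1)) (f n) := by
  constructor
  · rintro ⟨x, hx⟩
    exact ⟨fun n => (List.range n).map x, fun n =>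
      ⟨hx (n + 1), x n, by simp [List.range_succ]⟩⟩
  · rintro ⟨f, hf⟩
    have hmono : ∀ i j, i ≤ j → f i <+: f j := by
      intro i j hij
      induction j, hij using Nat.le_induction with
      | base => exact List.prefix_refl _
      | succ j _ ih =>
        obtain ⟨m, hm⟩ := (hf j).2
        exact hm ▸ ih.trans (List.prefix_append _ _)
    have hlen : ∀ n, n ≤ (f n).length := by
      intro n
      induction n with
      | zero => exact Nat.zero_le _
      | succ n ih =>
        obtain ⟨m, hm⟩ := (hf n).2
        rw [hm, List.length_append, List.length_singleton]
        omega
    refine ⟨fun i => (f (i + 1)).getD i 0, fun n => ?_⟩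
    have hprefix : (List.range n).map (fun i => (f (i + 1)).getD i 0) = (f n).take n := by
      refine List.ext_getElem (by simp [hlen n]) fun i hi _ => ?_
      simp only [List.length_map, List.length_range] at hi
      have hi' : i < (f (i + 1)).length := hlen (i + 1)
      simp only [List.getElem_map, List.getElem_range, List.getElem_take,
        List.getD_eq_getElem _ _ hi']
      exact (hmono (i + 1) n hi).getElem hi'
    rw [hprefix]
    exact hT _ (hT _ (hf n).1 _ (hmono n (n + 1) n.le_succ)) _ (List.take_prefix _ _)

theorem isWFTree_iff {T : Set (List ℕ)} : IsWFTree T ↔ IsTree T ∧ WellFounded (childRel T) := by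
  rw [IsWFTree, wellFounded_iff_isEmpty_descending_chain, isEmpty_subtype]
  refine and_congr_right fun hT => ?_
  rw [hasInfiniteBranch_iff_exists_descending_chain hT, not_exists]

section TreeRank

variable {T : Set (List ℕ)}

theorem treeRank_lt_of_childRel (hwf : WellFounded (childRel T)) {c ν : List ℕ}
    (h : childRel T c ν) : treeRank T c < treeRank T ν := by
  simp only [treeRank, dif_pos hwf]
  exact (hwf.apply ν).rank_lt_of_rel h

theorem treeRank_eq_iSup (hwf : WellFounded (childRel T)) (ν : List ℕ) :
    treeRank T ν = ⨆ c : {c // childRel T c ν}, Order.succ (treeRank T c) := by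
  simp only [treeRank, dif_pos hwf]
  exact (hwf.apply ν).rank_eq

theorem exists_childRel_le_treeRank (hwf : WellFounded (childRel T)) {ν : List ℕ} {β : Ordinal}
    (hβ : β < treeRank T ν) : ∃ c, childRel T c ν ∧ β ≤ treeRank T c := by
  rw [treeRank_eq_iSup hwf, Ordinal.lt_iSup_iff] at hβ
  obtain ⟨c, hc⟩ := hβ
  exact ⟨c.1, c.2, Order.lt_succ_iff.mp hc⟩

theorem treeRank_le_treeRank_nil (hwf : WellFounded (childRel T)) (hT : IsTree T) {ν : List ℕ}
    (hν : ν ∈ T) : treeRank T ν ≤ treeRank T [] := by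
  induction ν using List.reverseRecOn with
  | nil => exact le_rfl
  | append_singleton s m ih =>
    exact (treeRank_lt_of_childRel hwf ⟨hν, m, rfl⟩).le.trans
      (ih (hT.mem_of_append_singleton hν))

theorem treeRank_eq_of_forall_eq_iSup (hwf : WellFounded (childRel T)) {v : List ℕ → Ordinal}
    (hv : ∀ ν ∈ T, v ν = ⨆ c : {c // childRel T c ν}, Order.succ (v c)) :
    ∀ ν ∈ T, treeRank T ν = v ν := by
  intro ν
  induction ν using hwf.induction with
  | _ ν ih =>
    intro hν
    rw [treeRank_eq_iSup hwf, hv ν hν]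
    exact iSup_congr fun c => congrArg _ (ih c c.2 c.2.1)

end TreeRank

theorem treeRank_eq_of_labelling {T : Set (List ℕ)} {v : List ℕ → Ordinal}
    (hlt : ∀ c ν, childRel T c ν → v c < v ν)
    (hex : ∀ ν ∈ T, ∀ β < v ν, ∃ c, childRel T c ν ∧ β ≤ v c) :
    WellFounded (childRel T) ∧ ∀ ν ∈ T, treeRank T ν = v ν := by
  have hwf : WellFounded (childRel T) := Subrelation.wf (hlt _ _) (InvImage.wf v wellFounded_lt)
  refine ⟨hwf, treeRank_eq_of_forall_eq_iSup hwf fun ν hν => le_antisymm ?_ ?_⟩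
  · refine le_of_forall_lt fun β hβ => ?_
    obtain ⟨c, hc, hβc⟩ := hex ν hν β hβ
    exact (Order.lt_succ_of_le hβc).trans_le
      (Ordinal.le_iSup (fun c : {c // childRel T c ν} => Order.succ (v c)) ⟨c, hc⟩)
  · exact Ordinal.iSup_le fun c => Order.succ_le_of_lt (hlt _ _ c.2)

theorem countable_Iic_of_card_le_aleph0 {α : Ordinal} (hα : α.card ≤ Cardinal.aleph0) :
    (Iic α).Countable := by
  rw [← Iio_insert]
  refine Countable.insert α ?_
  rwa [← Cardinal.le_aleph0_iff_set_countable, Cardinal.mk_Iio_ordinal, Cardinal.lift_le_aleph0]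

-- Reducible, so that the `Option` API applies to codes; only the topology is new.
abbrev RankLabel (α : Ordinal) : Type _ := Option (Iic α)

instance (α : Ordinal) : TopologicalSpace (RankLabel α) := ⊥

instance (α : Ordinal) : DiscreteTopology (RankLabel α) := ⟨rfl⟩

section RankCode

variable {α : Ordinal}

theorem treeRank_le_of_mem_Atree (T : Atree α) {ν : List ℕ} (hν : ν ∈ T.1) :
    treeRank T.1 ν ≤ α := by
  obtain ⟨hT, hwf⟩ := isWFTree_iff.mp T.2.1
  exact (treeRank_le_treeRank_nil hwf hT hν).trans_eq T.2.2.2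

open Classical in
noncomputable def rankCode (T : Atree α) (ν : List ℕ) : RankLabel α :=
  if h : ν ∈ T.1 then some ⟨treeRank T.1 ν, treeRank_le_of_mem_Atree T h⟩ else none

theorem rankCode_eq_some_iff {T : Atree α} {ν : List ℕ} {γ : Iic α} :
    rankCode T ν = some γ ↔ ν ∈ T.1 ∧ treeRank T.1 ν = γ := by
  by_cases h : ν ∈ T.1
  · simp [rankCode, h, Subtype.ext_iff, eq_comm]
  · simp [rankCode, h]

theorem rankCode_eq_none_iff {T : Atree α} {ν : List ℕ} : rankCode T ν = none ↔ ν ∉ T.1 := by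
  by_cases h : ν ∈ T.1 <;> simp [rankCode, h]

theorem rankCode_eq_rankCode_iff {T T' : Atree α} {ν : List ℕ} :
    rankCode T' ν = rankCode T ν ↔
      (ν ∈ T'.1 ↔ ν ∈ T.1) ∧ (ν ∈ T.1 → treeRank T'.1 ν = treeRank T.1 ν) := by
  by_cases h : ν ∈ T.1 <;> by_cases h' : ν ∈ T'.1 <;> simp [rankCode, h, h', Subtype.ext_iff]

theorem rankCode_injective : Function.Injective (rankCode (α := α)) := fun _ _ h =>
  Subtype.ext <| Set.ext fun ν => (rankCode_eq_rankCode_iff.mp (congrFun h ν)).1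

theorem mem_Unbhd_iff_rankCode {n : ℕ} {T T' : Atree α} :
    T' ∈ Unbhd α n T ↔ ∀ ν ∈ seqBelow n, rankCode T' ν = rankCode T ν := by
  simp only [Unbhd, mem_ofPred_eq, rankCode_eq_rankCode_iff, Set.ext_iff, mem_inter_iff]
  grind

end RankCode

theorem finite_seqBelow (n : ℕ) : (seqBelow n).Finite := by
  have h : seqBelow n ⊆ (fun l : List (Fin n) => l.map Fin.val) '' {l | l.length ≤ n} := by
    rintro l ⟨hlen, hlt⟩
    refine ⟨l.pmap (fun x hx => (⟨x, hx⟩ : Fin n)) hlt, by simpa using hlen, ?_⟩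
    simp [List.map_pmap]
  exact ((List.finite_length_le (Fin n) n).image _).subset h

theorem exists_mem_seqBelow (ν : List ℕ) : ∃ n, ν ∈ seqBelow n :=
  ⟨ν.length + ν.sum + 1, by omega, fun x hx => by have := List.le_sum_of_mem hx; omega⟩

section Topology

variable {α : Ordinal}

theorem mem_Unbhd_self (n : ℕ) (T : Atree α) : T ∈ Unbhd α n T := ⟨rfl, fun _ _ => rfl⟩

theorem isOpen_Unbhd (n : ℕ) (T : Atree α) : IsOpen[tauTop α] (Unbhd α n T) :=
  TopologicalSpace.isOpen_generateFrom_of_mem ⟨n, T, rfl⟩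

theorem isEmbedding_rankCode :
    @IsEmbedding (Atree α) (List ℕ → RankLabel α) (tauTop α) _ rankCode := by
  let _ := tauTop α
  refine ⟨⟨le_antisymm ?_ ?_⟩, rankCode_injective⟩
  · refine continuous_iff_le_induced.mp (continuous_pi fun ν => continuous_discrete_rng.mpr
      fun c => isOpen_iff_forall_mem_open.mpr fun T hT => ?_)
    obtain ⟨n, hν⟩ := exists_mem_seqBelow ν
    exact ⟨Unbhd α n T, fun T' hT' => (mem_Unbhd_iff_rankCode.mp hT' ν hν).trans hT,
      isOpen_Unbhd n T, mem_Unbhd_self n T⟩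
  · refine le_generateFrom fun U ⟨n, T, hU⟩ => ?_
    refine isOpen_induced_iff.mpr ⟨⋂ ν ∈ seqBelow n, (fun F => F ν) ⁻¹' {rankCode T ν},
      (finite_seqBelow n).isOpen_biInter fun ν _ =>
        (isOpen_discrete _).preimage (continuous_apply ν), ?_⟩
    ext T'
    simp [hU, mem_Unbhd_iff_rankCode]

end Topology

section RankCodeRange

variable {α : Ordinal}

structure IsRankCode (F : List ℕ → RankLabel α) : Prop where
  nil : F [] = some ⊤
  lt_of_append : ∀ s m β, F (s ++ [m]) = some β → ∃ γ, F s = some γ ∧ β < γ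
  exists_append : ∀ s γ, F s = some γ → ∀ β < γ, ∃ m δ, F (s ++ [m]) = some δ ∧ β ≤ δ

theorem isRankCode_rankCode (T : Atree α) : IsRankCode (rankCode T) := by
  obtain ⟨hT, hwf⟩ := isWFTree_iff.mp T.2.1
  refine ⟨rankCode_eq_some_iff.mpr ⟨T.2.2.1, T.2.2.2⟩, fun s m β hβ => ?_, fun s γ hγ β hβ => ?_⟩
  · obtain ⟨hsm, hrank⟩ := rankCode_eq_some_iff.mp hβ
    have hs := hT.mem_of_append_singleton hsm
    refine ⟨⟨treeRank T.1 s, treeRank_le_of_mem_Atree T hs⟩, rankCode_eq_some_iff.mpr ⟨hs, rfl⟩, ?_⟩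
    exact Subtype.mk_lt_mk.mpr (hrank ▸ treeRank_lt_of_childRel hwf ⟨hsm, m, rfl⟩)
  · obtain ⟨hs, hrank⟩ := rankCode_eq_some_iff.mp hγ
    obtain ⟨c, ⟨hc, m, rfl⟩, hβc⟩ :=
      exists_childRel_le_treeRank hwf (hrank.symm ▸ Subtype.coe_lt_coe.mpr hβ)
    exact ⟨m, ⟨_, treeRank_le_of_mem_Atree T hc⟩, rankCode_eq_some_iff.mpr ⟨hc, rfl⟩, hβc⟩

theorem IsRankCode.mem_range_rankCode {F : List ℕ → RankLabel α} (hF : IsRankCode F) :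
    F ∈ range rankCode := by
  set T : Set (List ℕ) := {ν | F ν ≠ none}
  set v : List ℕ → Ordinal := fun ν => (F ν).elim 0 Subtype.val
  have hv : ∀ {ν γ}, F ν = some γ → v ν = γ := fun h => by simp [v, h]
  have hlt : ∀ c ν, childRel T c ν → v c < v ν := by
    rintro c ν ⟨hc, m, rfl⟩
    obtain ⟨β, hβ⟩ := Option.ne_none_iff_exists'.mp hc
    obtain ⟨γ, hγ, hβγ⟩ := hF.lt_of_append ν m β hβ
    rw [hv hβ, hv hγ]
    exact hβγ
  have hex : ∀ ν ∈ T, ∀ β < v ν, ∃ c, childRel T c ν ∧ β ≤ v c := by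
    intro ν hν β hβ
    obtain ⟨γ, hγ⟩ := Option.ne_none_iff_exists'.mp hν
    rw [hv hγ] at hβ
    obtain ⟨m, δ, hδ, hβδ⟩ := hF.exists_append ν γ hγ ⟨β, hβ.le.trans γ.2⟩ hβ
    exact ⟨ν ++ [m], ⟨by simp [T, hδ], m, rfl⟩, (hv hδ).symm ▸ hβδ⟩
  have hT : IsTree T := IsTree.of_append_singleton fun s m hsm hs => by
    obtain ⟨β, hβ⟩ := Option.ne_none_iff_exists'.mp hsm
    obtain ⟨γ, hγ, -⟩ := hF.lt_of_append s m β hβ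
    simp [hγ] at hs
  obtain ⟨hwf, hrank⟩ := treeRank_eq_of_labelling hlt hex
  have hnil : [] ∈ T := by simp [T, hF.nil]
  refine ⟨⟨T, isWFTree_iff.mpr ⟨hT, hwf⟩, hnil, by simp [hrank [] hnil, hv hF.nil]⟩,
    funext fun ν => ?_⟩
  rcases hν : F ν with _ | γ
  · exact rankCode_eq_none_iff.mpr (by simp [T, hν])
  · exact rankCode_eq_some_iff.mpr ⟨by simp [T, hν], (hrank ν (by simp [T, hν])).trans (hv hν)⟩

theorem range_rankCode : range (rankCode (α := α)) = {F | IsRankCode F} :=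
  Subset.antisymm (range_subset_iff.mpr isRankCode_rankCode) fun _ hF => hF.mem_range_rankCode

end RankCodeRange

theorem isGδ_setOf_isRankCode {α : Ordinal} [Countable (Iic α)] :
    IsGδ {F : List ℕ → RankLabel α | IsRankCode F} := by
  have hopen : ∀ (ν μ : List ℕ) (p : RankLabel α → RankLabel α → Prop),
      IsOpen {F : List ℕ → RankLabel α | p (F ν) (F μ)} := fun ν μ p => by
    have hc : Continuous fun F : List ℕ → RankLabel α => (F ν, F μ) := by fun_prop
    exact hc.isOpen_preimage {q | p q.1 q.2} (isOpen_discrete _)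
  have hset : {F : List ℕ → RankLabel α | IsRankCode F} =
      {F | F [] = some ⊤} ∩
      (⋂ (s : List ℕ) (m : ℕ) (β : Iic α),
        {F | F (s ++ [m]) = some β → ∃ γ, F s = some γ ∧ β < γ}) ∩
      ⋂ (s : List ℕ) (γ : Iic α) (β : Iic α) (_ : β < γ),
        {F | F s = some γ → ∃ m δ, F (s ++ [m]) = some δ ∧ β ≤ δ} := by
    ext F
    simp only [mem_inter_iff, mem_iInter, mem_ofPred_eq]
    exact ⟨fun ⟨h1, h2, h3⟩ => ⟨⟨h1, h2⟩, fun s γ β hβ hγ => h3 s γ hγ β hβ⟩,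
      fun ⟨⟨h1, h2⟩, h3⟩ => ⟨h1, h2, fun s γ hγ β hβ => h3 s γ β hβ hγ⟩⟩
  rw [hset]
  refine ((hopen [] [] fun a _ => a = some ⊤).isGδ.inter (.iInter fun s => .iInter fun m =>
    .iInter fun β =>
      (hopen (s ++ [m]) s fun a b => a = some β → ∃ γ, b = some γ ∧ β < γ).isGδ)).inter
    (.iInter fun s => .iInter fun γ => .iInter fun β => .iInter fun _ => IsOpen.isGδ ?_)
  simp only [imp_iff_not_or, ofPred_or, ofPred_exists]
  exact (hopen s s fun a _ => a ≠ some γ).union (isOpen_iUnion fun m => isOpen_iUnion fun δ =>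
    hopen (s ++ [m]) s fun a _ => a = some δ ∧ β ≤ δ)

/-- For every countable ordinal `α`, `⟨A_α, τ_α⟩` is a Baire space; in fact every
basic τ_α-open set `U(n,T)` (which is nonempty, containing `T`) is not τ_α-meager. -/
theorem stmt7 (α : Ordinal) (hα : α.card ≤ Cardinal.aleph0) :
    @BaireSpace ↥(Atree α) (tauTop α) ∧
    ∀ (n : ℕ) (T : ↥(Atree α)),
      (Unbhd α n T).Nonempty ∧ ¬ @IsMeagre ↥(Atree α) (tauTop α) (Unbhd α n T) := by
  let _ := tauTop α
  have : Countable (Iic α) := (countable_Iic_of_card_le_aleph0 hα).to_subtype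
  have : BaireSpace (Atree α) :=
    isEmbedding_rankCode.baireSpace_of_isGδ_range (range_rankCode ▸ isGδ_setOf_isRankCode)
  exact ⟨this, fun n T => ⟨⟨T, mem_Unbhd_self n T⟩,
    not_isMeagre_of_isOpen (isOpen_Unbhd n T) ⟨T, mem_Unbhd_self n T⟩⟩⟩
end

section
/- For every Borel measurable function f : ℝ → ℝ there exists a perfect set P ⊆ ℝ (nonempty, closed, without isolated points) such that the preimage f⁻¹[P] is both meager and Lebesgue null. -/
/-!
Embed the Cantor space `(ℕ → Bool) × (ℕ → Bool)` continuously into `ℝ`; the images of the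
fibres `{t} × (ℕ → Bool)` form an uncountable family of pairwise disjoint perfect sets. Their
preimages under `f` are pairwise disjoint Borel sets, so only countably many of them have positive
measure (σ-finiteness of Lebesgue measure) and only countably many are non-meagre (each non-meagre
Borel set is comeagre in some basic open set, and disjoint sets cannot share one).
-/

open Set MeasureTheory Filter Topology Function

instance : Uncountable (ℕ → Bool) :=
  uncountable_iff_forall_not_surjective.2 fun f hf ↦ by
    obtain ⟨n, hn⟩ := hf fun n ↦ !f n n
    simpa using congrFun hn n

instance Pi.perfectSpace {ι : Type*} {X : ι → Type*} [∀ i, TopologicalSpace (X i)] [Infinite ι]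
    [∀ i, Nontrivial (X i)] : PerfectSpace (∀ i, X i) := by
  classical
  refine perfectSpace_iff_forall_not_isolated.2 fun x ↦ ?_
  choose y hy using fun i ↦ exists_ne (x i)
  let e := Infinite.natEmbedding ι
  let seq : ℕ → ∀ i, X i := fun n ↦ update x (e n) (y (e n))
  have hseq : Tendsto seq atTop (𝓝[≠] x) := by
    refine tendsto_nhdsWithin_iff.2 ⟨tendsto_pi_nhds.2 fun i ↦ ?_, .of_forall fun n h ↦ ?_⟩
    · refine tendsto_const_nhds.congr' ?_
      have : Tendsto e atTop cofinite := Nat.cofinite_eq_atTop ▸ e.injective.tendsto_cofinite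
      filter_upwards [this.eventually (eventually_cofinite_ne i)] with n hn
      simp [seq, update_of_ne hn.symm]
    · simpa [seq, hy] using congrFun h (e n)
  exact hseq.neBot

def Homeomorph.natArrowProdNatArrow (X : Type*) [TopologicalSpace X] :
    (ℕ → X) ≃ₜ (ℕ → X) × (ℕ → X) :=
  (Homeomorph.piCongrLeft Equiv.natSumNatEquivNat).symm.trans
    Homeomorph.sumArrowHomeomorphProdArrow

theorem Perfect.image_of_isClosedEmbedding {X Y : Type*} [TopologicalSpace X] [TopologicalSpace Y]
    {e : X → Y} (he : IsClosedEmbedding e) {C : Set X} (hC : Perfect C) : Perfect (e '' C) := by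
  refine ⟨he.isClosedMap C hC.closed, ?_⟩
  rintro _ ⟨x, hx, rfl⟩
  simpa using (hC.acc x hx).map he.continuous.continuousAt he.injective

theorem pairwise_disjoint_range_curry {α β γ : Type*} {G : α × β → γ} (hG : Injective G) :
    Pairwise (Disjoint on fun a ↦ range fun b ↦ G (a, b)) := by
  rintro a a' haa'
  refine disjoint_left.2 ?_
  rintro _ ⟨b, rfl⟩ ⟨b', hb'⟩
  exact haa' (congrArg Prod.fst (hG hb')).symm

theorem Perfect.exists_pairwise_disjoint_nat_bool {α : Type*} [MetricSpace α] [CompleteSpace α]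
    {C : Set α} (hC : Perfect C) (hne : C.Nonempty) :
    ∃ P : (ℕ → Bool) → Set α, (∀ t, Perfect (P t) ∧ (P t).Nonempty) ∧ Pairwise (Disjoint on P) := by
  obtain ⟨g, -, hgc, hgi⟩ := hC.exists_nat_bool_injection hne
  let φ := (Homeomorph.natArrowProdNatArrow Bool).symm
  have hGi : Injective (g ∘ φ) := hgi.comp φ.injective
  refine ⟨fun t ↦ range fun s ↦ g (φ (t, s)), fun t ↦ ⟨?_, range_nonempty _⟩,
    pairwise_disjoint_range_curry hGi⟩
  have hemb : IsClosedEmbedding fun s ↦ g (φ (t, s)) :=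
    (hgc.comp (φ.continuous.comp (Continuous.prodMk_right t))).isClosedEmbedding
      (hGi.comp (Prod.mk_right_injective t))
  simpa using (PerfectSpace.univ_perfect (α := ℕ → Bool)).image_of_isClosedEmbedding hemb

theorem Filter.EventuallyEq.isMeagre_diff {X : Type*} [TopologicalSpace X] {s t : Set X}
    (h : s =ᵇ t) : IsMeagre (s \ t) := by
  filter_upwards [h] with x (hx : (x ∈ s) = (x ∈ t)) using fun hxst ↦ hxst.2 (hx ▸ hxst.1)

theorem BaireMeasurableSet.exists_isOpen_nonempty_diff_isMeagre {X : Type*} [TopologicalSpace X]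
    {s : Set X} (hs : BaireMeasurableSet s) (hns : ¬IsMeagre s) :
    ∃ u, IsOpen u ∧ u.Nonempty ∧ IsMeagre (u \ s) := by
  obtain ⟨u, hu, hsu⟩ := hs.residualEq_isOpen
  refine ⟨u, hu, nonempty_iff_ne_empty.2 fun hu₀ ↦ hns ?_, hsu.symm.isMeagre_diff⟩
  simpa [hu₀] using hsu.isMeagre_diff

theorem countable_setOf_not_isMeagre_of_pairwise_disjoint {X ι : Type*} [TopologicalSpace X]
    [SecondCountableTopology X] [BaireSpace X] {A : ι → Set X} (hA : ∀ i, BaireMeasurableSet (A i))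
    (hd : Pairwise (Disjoint on A)) : {i | ¬IsMeagre (A i)}.Countable := by
  obtain ⟨B, hBc, -, hB⟩ := TopologicalSpace.exists_countable_basis X
  have : ∀ i ∈ {i | ¬IsMeagre (A i)}, ∃ b ∈ B, b.Nonempty ∧ IsMeagre (b \ A i) := by
    intro i hi
    obtain ⟨u, hu, ⟨x, hx⟩, hum⟩ := (hA i).exists_isOpen_nonempty_diff_isMeagre hi
    obtain ⟨b, hbB, hxb, hbu⟩ := hB.exists_subset_of_mem_open hx hu
    exact ⟨b, hbB, ⟨x, hxb⟩, hum.mono (sdiff_subset_sdiff_left hbu)⟩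
  choose! b hbB hbne hbm using this
  refine MapsTo.countable_of_injOn hbB (fun i hi j hj hij ↦ by_contra fun hne ↦ ?_) hBc
  have : IsMeagre (b i) := ((hbm i hi).union (hij ▸ hbm j hj)).mono fun x hx ↦ by
    by_cases hxi : x ∈ A i
    · exact .inr ⟨hij ▸ hx, (hd hne).notMem_of_mem_left hxi⟩
    · exact .inl ⟨hx, hxi⟩
  exact not_isMeagre_of_isOpen (hB.isOpen (hbB i hi)) (hbne i hi) this

/-- For every Borel function `f : ℝ → ℝ` there is a perfect set `P ⊆ ℝ` whose preimage
`f⁻¹[P]` is both meager and Lebesgue null. -/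
theorem stmt14 (f : ℝ → ℝ) (hf : Measurable f) :
    ∃ P : Set ℝ, Perfect P ∧ P.Nonempty ∧ IsMeagre (f ⁻¹' P) ∧ volume (f ⁻¹' P) = 0 := by
  obtain ⟨P, hP, hPd⟩ :=
    (PerfectSpace.univ_perfect (α := ℝ)).exists_pairwise_disjoint_nat_bool univ_nonempty
  have hmeas (t) : MeasurableSet (f ⁻¹' P t) := hf (hP t).1.closed.measurableSet
  have hdisj : Pairwise (Disjoint on fun t ↦ f ⁻¹' P t) := fun _ _ h ↦ (hPd h).preimage f
  have hbad : ({t | 0 < volume (f ⁻¹' P t)} ∪ {t | ¬IsMeagre (f ⁻¹' P t)}).Countable :=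
    (Measure.countable_meas_pos_of_disjoint_iUnion hmeas hdisj).union
      (countable_setOf_not_isMeagre_of_pairwise_disjoint (fun t ↦ (hmeas t).baireMeasurableSet)
        hdisj)
  obtain ⟨t, ht⟩ : ∃ t, t ∉ {t | 0 < volume (f ⁻¹' P t)} ∪ {t | ¬IsMeagre (f ⁻¹' P t)} := by
    by_contra! h
    exact not_countable_univ (hbad.mono fun t _ ↦ h t)
  simp only [mem_union, mem_ofPred_eq, not_or, pos_iff_ne_zero, not_not] at ht
  exact ⟨P t, (hP t).1, (hP t).2, ht.2, ht.1⟩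
end

section
/- Let U ⊆ ℝ be a nonempty open set and let A ⊆ ℝ be a set that is both meager and Lebesgue null. Then there exist pairwise disjoint sets D_k ⊆ U and real numbers x_k (for k ∈ ℕ) such that ⋃_{k∈ℕ} D_k is nowhere dense and A ⊆ ⋃_{k∈ℕ} (D_k + x_k). -/
/-!
Write `A ⊆ ⋃ n, C n` with every `C n` nowhere dense. As `A` is null, each `A ∩ C n` is covered by
intervals whose lengths sum to at most `δ n`, where `∑ δ n` is less than the length of an interval
`(a, b) ⊆ U`. The pieces `A ∩ C n ∩ I` are nowhere dense and have summable lengths `ℓ i`, so they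
can be translated into the consecutive disjoint slots `(c i, c (i + 1)]`, `c i = a + ∑_{j<i} ℓ j`,
which stay inside `(a, b)`. The union of the translated pieces is nowhere dense: away from the
single accumulation point `lim c i` it is a locally finite union of nowhere dense sets.
-/

open Set MeasureTheory Filter Topology ENNReal NNReal

lemma IsNowhereDense.union {X : Type*} [TopologicalSpace X] {s t : Set X}
    (hs : IsNowhereDense s) (ht : IsNowhereDense t) : IsNowhereDense (s ∪ t) := by
  rw [IsNowhereDense, closure_union,
    interior_union_isClosed_of_interior_empty isClosed_closure ht]
  exact hs

lemma Set.Finite.isNowhereDense_biUnion {X ι : Type*} [TopologicalSpace X] {F : Set ι}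
    (hF : F.Finite) {D : ι → Set X} (hD : ∀ i ∈ F, IsNowhereDense (D i)) :
    IsNowhereDense (⋃ i ∈ F, D i) := by
  induction F, hF using Set.Finite.induction_on with
  | empty => simp
  | insert _ _ ih =>
    rw [biUnion_insert]
    exact (hD _ (mem_insert _ _)).union (ih fun i hi => hD i (mem_insert_of_mem _ hi))

theorem isNowhereDense_iUnion_of_locallyFinite_on_dense {X ι : Type*} [TopologicalSpace X]
    {D : ι → Set X} {O : Set X} (hO : Dense O) (hD : ∀ i, IsNowhereDense (D i))
    (hloc : ∀ x ∈ O, ∃ t ∈ 𝓝 x, {i | (D i ∩ t).Nonempty}.Finite) :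
    IsNowhereDense (⋃ i, D i) := by
  rw [IsNowhereDense, ← not_nonempty_iff_eq_empty]
  intro hne
  obtain ⟨x, hx, hxO⟩ := hO.inter_open_nonempty _ isOpen_interior hne
  obtain ⟨t, ht, hfin⟩ := hloc x hxO
  have hW : interior t ∩ interior (closure (⋃ i, D i)) ⊆
      closure (⋃ i ∈ {i | (D i ∩ t).Nonempty}, D i) := by
    rintro y ⟨hyt, hy⟩
    refine closure_mono ?_ (isOpen_interior.inter_closure ⟨hyt, interior_subset hy⟩)
    rintro z ⟨hzt, hz⟩
    obtain ⟨i, hzi⟩ := mem_iUnion.1 hz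
    exact mem_biUnion ⟨z, hzi, interior_subset hzt⟩ hzi
  have hx' := interior_maximal hW (isOpen_interior.inter isOpen_interior)
    ⟨mem_interior_iff_mem_nhds.2 ht, hx⟩
  rwa [hfin.isNowhereDense_biUnion fun i _ => hD i] at hx'

theorem isNowhereDense_iUnion_of_subset_Icc {ι : Type*} {D : ι → Set ℝ} {c : ι → ℝ} {s : ℝ}
    (hD : ∀ i, IsNowhereDense (D i)) (hDc : ∀ i, D i ⊆ Icc (c i) s)
    (hc : Tendsto c cofinite (𝓝 s)) : IsNowhereDense (⋃ i, D i) := by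
  refine isNowhereDense_iUnion_of_locallyFinite_on_dense (dense_compl_singleton s) hD ?_
  intro x hx
  rcases lt_or_gt_of_ne hx with hxs | hsx
  · obtain ⟨m, hxm, hms⟩ := exists_between hxs
    refine ⟨Iio m, Iio_mem_nhds hxm, ?_⟩
    refine (eventually_cofinite.1 (hc.eventually (lt_mem_nhds hms))).subset ?_
    rintro i ⟨y, hy, hym⟩ hmc
    exact ((hDc i hy).1.trans_lt hym).not_gt hmc
  · refine ⟨Ioi s, Ioi_mem_nhds hsx, finite_empty.subset ?_⟩
    rintro i ⟨y, hy, hsy⟩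
    exact (hDc i hy).2.not_gt hsy

lemma IsMeagre.exists_isNowhereDense_seq {X : Type*} [TopologicalSpace X] {A : Set X}
    (hA : IsMeagre A) : ∃ C : ℕ → Set X, (∀ n, IsNowhereDense (C n)) ∧ A ⊆ ⋃ n, C n := by
  obtain ⟨S, hS, hSc, hAS⟩ := isMeagre_iff_countable_union_isNowhereDense.1 hA
  obtain ⟨C, hC⟩ := (hSc.insert ∅).exists_eq_range (insert_nonempty _ _)
  refine ⟨C, fun n => ?_, ?_⟩
  · rcases hC ▸ mem_range_self n with h | h
    · simp [h]
    · exact hS _ h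
  · rw [← sUnion_range, ← hC]
    exact hAS.trans (sUnion_mono (subset_insert _ _))

lemma StieltjesFunction.exists_Ioc_of_length_lt (f : StieltjesFunction ℝ) {s : Set ℝ}
    {r : ℝ≥0∞} (h : f.length s < r) : ∃ a b, s ⊆ Ioc a b ∧ ENNReal.ofReal (f b - f a) < r := by
  simpa [length_eq, botSet, iInf_lt_iff] using h

lemma exists_Ioc_cover_of_volume_eq_zero {S : Set ℝ} (hS : volume S = 0) {ε : ℝ≥0∞}
    (hε : ε ≠ 0) : ∃ (p : ℕ → ℝ) (ℓ : ℕ → ℝ≥0),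
      S ⊆ ⋃ n, Ioc (p n) (p n + ℓ n) ∧ ∑' n, (ℓ n : ℝ≥0∞) ≤ ε := by
  obtain ⟨δ, hδ0, hδ⟩ := ENNReal.exists_pos_sum_of_countable (ENNReal.half_pos hε).ne' ℕ
  have hout : StieltjesFunction.id.outer S < ε / 2 := by
    rw [Real.volume_eq_stieltjes_id, StieltjesFunction.measure_def] at hS
    exact hS.trans_lt (ENNReal.half_pos hε)
  obtain ⟨t, hSt, ht⟩ : ∃ t : ℕ → Set ℝ,
      S ⊆ ⋃ n, t n ∧ ∑' n, StieltjesFunction.id.length (t n) < ε / 2 := by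
    simpa [StieltjesFunction.outer, OuterMeasure.ofFunction_apply, iInf_lt_iff] using hout
  have hlen : ∀ n, StieltjesFunction.id.length (t n) ≠ ∞ := fun n =>
    ne_top_of_le_ne_top (ht.trans_le le_top).ne (ENNReal.le_tsum n)
  choose p q htpq hpq using fun n => StieltjesFunction.id.exists_Ioc_of_length_lt
    (ENNReal.lt_add_right (hlen n) (ENNReal.coe_ne_zero.2 (hδ0 n).ne'))
  refine ⟨p, fun n => (q n - p n).toNNReal,
    hSt.trans (iUnion_mono fun n => (htpq n).trans (Ioc_subset_Ioc_right ?_)), ?_⟩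
  · simp only [Real.coe_toNNReal']
    linarith [le_max_left (q n - p n) 0]
  · calc ∑' n, ((q n - p n).toNNReal : ℝ≥0∞)
        ≤ ∑' n, (StieltjesFunction.id.length (t n) + δ n) :=
          ENNReal.tsum_le_tsum fun n => (hpq n).le
      _ = ∑' n, StieltjesFunction.id.length (t n) + ∑' n, (δ n : ℝ≥0∞) := ENNReal.tsum_add
      _ ≤ ε / 2 + ε / 2 := add_le_add ht.le hδ.le
      _ = ε := ENNReal.add_halves ε

theorem exists_isNowhereDense_Ioc_cover {A : Set ℝ} (hA : IsMeagre A) (hnull : volume A = 0)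
    {ε : ℝ≥0∞} (hε : ε ≠ 0) : ∃ (P : ℕ → Set ℝ) (p : ℕ → ℝ) (ℓ : ℕ → ℝ≥0),
      (∀ i, IsNowhereDense (P i)) ∧ (∀ i, P i ⊆ Ioc (p i) (p i + ℓ i)) ∧
      A ⊆ ⋃ i, P i ∧ ∑' i, (ℓ i : ℝ≥0∞) ≤ ε := by
  obtain ⟨C, hC, hAC⟩ := hA.exists_isNowhereDense_seq
  obtain ⟨δ, hδ0, hδ⟩ := ENNReal.exists_pos_sum_of_countable hε ℕ
  choose p ℓ hcov hℓ using fun n => exists_Ioc_cover_of_volume_eq_zero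
    (measure_mono_null (inter_subset_left (t := C n)) hnull) (ENNReal.coe_ne_zero.2 (hδ0 n).ne')
  let e : ℕ ≃ ℕ × ℕ := Nat.pairEquiv.symm
  refine ⟨fun i => A ∩ C (e i).1 ∩ Ioc (p (e i).1 (e i).2) (p (e i).1 (e i).2 + ℓ (e i).1 (e i).2),
    fun i => p (e i).1 (e i).2, fun i => ℓ (e i).1 (e i).2,
    fun i => (hC _).mono (inter_subset_left.trans inter_subset_right),
    fun i => inter_subset_right, ?_, ?_⟩
  · intro z hz
    obtain ⟨n, hn⟩ := mem_iUnion.1 (hAC hz)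
    obtain ⟨k, hk⟩ := mem_iUnion.1 (hcov n ⟨hz, hn⟩)
    exact mem_iUnion.2 ⟨e.symm (n, k), by simp [hz, hn, hk]⟩
  · calc ∑' i, (ℓ (e i).1 (e i).2 : ℝ≥0∞) = ∑' nk : ℕ × ℕ, (ℓ nk.1 nk.2 : ℝ≥0∞) :=
          e.tsum_eq fun nk => (ℓ nk.1 nk.2 : ℝ≥0∞)
      _ = ∑' n, ∑' k, (ℓ n k : ℝ≥0∞) := ENNReal.tsum_prod (f := fun n k => (ℓ n k : ℝ≥0∞))
      _ ≤ ∑' n, (δ n : ℝ≥0∞) := ENNReal.tsum_le_tsum hℓ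
      _ ≤ ε := hδ.le

theorem exists_disjoint_translates_subset_Ioo {a b : ℝ} {P : ℕ → Set ℝ} {p : ℕ → ℝ}
    {ℓ : ℕ → ℝ≥0} (hP : ∀ i, IsNowhereDense (P i)) (hPI : ∀ i, P i ⊆ Ioc (p i) (p i + ℓ i))
    (hℓ : ∑' i, (ℓ i : ℝ≥0∞) < ENNReal.ofReal (b - a)) :
    ∃ (D : ℕ → Set ℝ) (x : ℕ → ℝ), (Pairwise fun i j => Disjoint (D i) (D j)) ∧
      (∀ i, D i ⊆ Ioo a b) ∧ IsNowhereDense (⋃ i, D i) ∧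
      ∀ i, P i ⊆ (fun d => d + x i) '' D i := by
  have hsum : Summable ℓ := ENNReal.tsum_coe_ne_top_iff_summable.1 (hℓ.trans_le le_top).ne
  have hL : a + ∑' i, (ℓ i : ℝ) < b := by
    rw [← ENNReal.coe_tsum hsum, ← ENNReal.ofReal_coe_nnreal, ENNReal.ofReal_lt_ofReal_iff',
      NNReal.coe_tsum] at hℓ
    linarith [hℓ.1]
  let c : ℕ → ℝ := fun i => a + ∑ j ∈ Finset.range i, (ℓ j : ℝ)
  have hc_succ : ∀ i, c (i + 1) = c i + ℓ i := fun i => by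
    simp only [c, Finset.sum_range_succ, add_assoc]
  have hc_mono : Monotone c := monotone_nat_of_le_succ fun i => by
    rw [hc_succ]; exact le_add_of_nonneg_right (ℓ i).2
  have hc_tendsto : Tendsto c atTop (𝓝 (a + ∑' i, (ℓ i : ℝ))) :=
    (NNReal.summable_coe.2 hsum).hasSum.tendsto_sum_nat.const_add a
  have hDc : ∀ i, (· + (c i - p i)) '' P i ⊆ Ioc (c i) (c (i + 1)) := by
    rintro i _ ⟨z, hz, rfl⟩
    have := hPI i hz
    constructor <;> linarith [hc_succ i, this.1, this.2]
  refine ⟨fun i => (· + (c i - p i)) '' P i, fun i => p i - c i,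
    hc_mono.pairwise_disjoint_on_Ioc_succ.mono fun i j h => h.mono (hDc i) (hDc j),
    fun i => (hDc i).trans ?_, ?_, fun i z hz => ⟨z + (c i - p i), mem_image_of_mem _ hz, by ring⟩⟩
  · exact Ioc_subset_Ioo (by simpa [c] using hc_mono (Nat.zero_le i))
      ((hc_mono.ge_of_tendsto hc_tendsto (i + 1)).trans_lt hL)
  · refine isNowhereDense_iUnion_of_subset_Icc
      (fun i => (Homeomorph.addRight _).isInducing.isNowhereDense_image (hP i))
      (fun i => (hDc i).trans (Ioc_subset_Icc_self.trans (Icc_subset_Icc_right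
        (hc_mono.ge_of_tendsto hc_tendsto (i + 1)))))
      (Nat.cofinite_eq_atTop ▸ hc_tendsto)

/-- If `U ⊆ ℝ` is nonempty open and `A ⊆ ℝ` is both meager and Lebesgue null, then
there are pairwise disjoint sets `D k ⊆ U` and reals `x k` such that `⋃ k, D k` is
nowhere dense and `A ⊆ ⋃ k, (D k + x k)`. -/
theorem stmt15 (U : Set ℝ) (hU : IsOpen U) (hUne : U.Nonempty)
    (A : Set ℝ) (hA : IsMeagre A) (hnull : volume A = 0) :
    ∃ (D : ℕ → Set ℝ) (x : ℕ → ℝ),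
      (Pairwise fun i j => Disjoint (D i) (D j)) ∧
      (∀ k, D k ⊆ U) ∧
      IsNowhereDense (⋃ k, D k) ∧
      A ⊆ ⋃ k, (fun d => d + x k) '' D k := by
  obtain ⟨a, b, hab, habU⟩ := hU.exists_Ioo_subset hUne
  obtain ⟨P, p, ℓ, hP, hPI, hAP, hℓ⟩ := exists_isNowhereDense_Ioc_cover hA hnull
    (ε := ENNReal.ofReal ((b - a) / 2)) (by simpa using hab)
  obtain ⟨D, x, hdisj, hDab, hD, hPD⟩ := exists_disjoint_translates_subset_Ioo hP hPI
    (hℓ.trans_lt ((ENNReal.ofReal_lt_ofReal_iff (sub_pos.2 hab)).2 (by linarith)))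
  exact ⟨D, x, hdisj, fun k => (hDab k).trans habU, hD, hAP.trans (iUnion_mono hPD)⟩
end

section
/- Let x ∈ X. The ideal I has property (M'_x) if and only if there exists a Borel measurable function f : X → X such that for each n ∈ ℕ with x ∈ U_n, the set H_n(f) contains a nonempty perfect subset of X. -/
open Set MeasureTheory

/-- `I` has property (M) relative to `E ⊆ X`: there is a Borel measurable function
`f : E → X` all of whose fibers (as subsets of `X`) are outside `I`. -/
def MRel {X : Type*} [TopologicalSpace X] [MeasurableSpace X]
    (I : Set (Set X)) (E : Set X) : Prop :=
  ∃ f : ↥E → X, Measurable f ∧ ∀ x : X, (Subtype.val '' (f ⁻¹' {x})) ∉ I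

/-- `I` has property (M'_x): it has property (M) relative to every open
neighborhood of `x`. -/
def MPrimeAt {X : Type*} [TopologicalSpace X] [MeasurableSpace X]
    (I : Set (Set X)) (x : X) : Prop :=
  ∀ U : Set X, IsOpen U → x ∈ U → MRel I U

/-- `H_n(f) = {y ∈ X : U n ∩ f⁻¹[{y}] ∉ I}`. -/
def Hset {X : Type*} (I : Set (Set X)) (U : ℕ → Set X) (f : X → X) (n : ℕ) : Set X :=
  {y | U n ∩ f ⁻¹' {y} ∉ I}

/-!
If `f` witnesses the right-hand side and `U n ⊆ U` is a basic neighbourhood of `x`, compose `f`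
with a Borel map sending a perfect set `P ⊆ H_n(f)` onto `X`: each fibre of the composite then
contains some `U n ∩ f⁻¹{p}` with `p ∈ P`, which is `I`-positive.

Conversely, assume (M'_x). Either some Borel `g` has, on every neighbourhood of `x`, an
`I`-positive fibre over a point of every nonempty perfect set; then composing `g` with a Borel map
whose fibres over the points of a perfect set `K` all contain perfect sets puts `K` into every
`H_n`. Or every neighbourhood `W` of `x` contains a smaller one `W'` together with a Borel map
whose fibres over some perfect set are `I`-positive already on `W \ W'`; iterating along a
shrinking sequence of neighbourhoods with the `n`-th one inside `U n` (when `x ∈ U n`), the annuli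
`W \ W'` are disjoint and the maps can be pasted together.
-/

open Function TopologicalSpace

instance inst_s16 : Uncountable (ℕ → Bool) :=
  Cardinal.aleph0_lt_mk_iff.mp (by simpa using Cardinal.cantor Cardinal.aleph0)

section Cantor

variable {X : Type*} [TopologicalSpace X]

lemma exists_perfect_subset_range_of_continuous_injective [T2Space X] [SecondCountableTopology X]
    {G : (ℕ → Bool) → X} (hc : Continuous G) (hi : Injective G) :
    ∃ P ⊆ range G, Perfect P ∧ P.Nonempty := by
  have hunc : ¬ (range G).Countable := fun h =>
    have := h.to_subtype
    not_countable (Countable.of_equiv _ (Equiv.ofInjective G hi).symm)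
  obtain ⟨P, hP, hPne, hPG⟩ :=
    exists_perfect_nonempty_of_isClosed_of_not_countable (isCompact_range hc).isClosed hunc
  exact ⟨P, hPG, hP, hPne⟩

variable [PolishSpace X] [MeasurableSpace X] [BorelSpace X]

lemma exists_measurable_perfect_subset_fibers [Uncountable X] :
    ∃ σ : X → X, Measurable σ ∧ ∃ K : Set X, Perfect K ∧ K.Nonempty ∧
      ∀ y ∈ K, ∃ Q ⊆ σ ⁻¹' {y}, Perfect Q ∧ Q.Nonempty := by
  obtain ⟨F, -, hFc, hFi⟩ :=
    isClosed_univ.exists_nat_bool_injection_of_not_countable (not_countable_univ (α := X))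
  -- `σ` extends the projection `(a, b) ↦ b`, read through an embedding of the Cantor square.
  let h : (ℕ → Bool) × (ℕ → Bool) ≃ₜ (ℕ → Bool) :=
    Homeomorph.sumArrowHomeomorphProdArrow.symm.trans
      (Homeomorph.piCongrLeft (Y := fun _ => Bool) Equiv.natSumNatEquivNat)
  have hΦc : Continuous (F ∘ h) := hFc.comp h.continuous
  have hΦi : Injective (F ∘ h) := hFi.comp h.injective
  obtain ⟨σ, hσ, hσΦ⟩ := (hΦc.isClosedEmbedding hΦi).measurableEmbedding.exists_measurable_extend
    (hFc.measurable.comp measurable_snd) fun _ => ⟨F default⟩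
  obtain ⟨K, hKF, hK, hKne⟩ := exists_perfect_subset_range_of_continuous_injective hFc hFi
  refine ⟨σ, hσ, K, hK, hKne, ?_⟩
  rintro _ hy
  obtain ⟨b, rfl⟩ := hKF hy
  obtain ⟨Q, hQ, hQperf, hQne⟩ := exists_perfect_subset_range_of_continuous_injective
    (hΦc.comp (Continuous.prodMk_left b)) (hΦi.comp (Prod.mk_left_injective b))
  refine ⟨Q, fun z hz => ?_, hQperf, hQne⟩
  obtain ⟨a, rfl⟩ := hQ hz
  exact congrFun hσΦ (a, b)

lemma Perfect.exists_measurable_surjOn {Y : Type*} [TopologicalSpace Y] [PolishSpace Y]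
    [MeasurableSpace Y] [BorelSpace Y] [Uncountable Y] {P : Set X} (hP : Perfect P)
    (hPne : P.Nonempty) : ∃ ψ : X → Y, Measurable ψ ∧ SurjOn ψ P univ := by
  let := upgradeIsCompletelyMetrizable X
  obtain ⟨F, hFP, hFc, hFi⟩ := hP.exists_nat_bool_injection hPne
  let E : (ℕ → Bool) ≃ᵐ Y := (PolishSpace.measurableEquivNatBoolOfNotCountable not_countable).symm
  obtain ⟨ψ, hψ, hψF⟩ := (hFc.isClosedEmbedding hFi).measurableEmbedding.exists_measurable_extend
    E.measurable fun _ => ⟨E default⟩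
  refine ⟨ψ, hψ, fun y _ => ⟨F (E.symm y), hFP (mem_range_self _), ?_⟩⟩
  rw [← comp_apply (f := ψ), hψF, MeasurableEquiv.apply_symm_apply]

end Cantor

section Fibers

variable {X : Type*} {I : Set (Set X)}

/-- `Hset I U f n` is `positiveFiberSet I (U n) f`. -/
def positiveFiberSet (I : Set (Set X)) (W : Set X) (f : X → X) : Set X :=
  {y | W ∩ f ⁻¹' {y} ∉ I}

lemma positiveFiberSet_mono (hI : IsLowerSet I) {W W' : Set X} (hW : W ⊆ W') (f : X → X) :
    positiveFiberSet I W f ⊆ positiveFiberSet I W' f :=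
  fun _ hy hy' => hy (hI (inter_subset_inter_left _ hW) hy')

lemma positiveFiberSet_congr {W : Set X} {f g : X → X} (hfg : EqOn f g W) :
    positiveFiberSet I W f = positiveFiberSet I W g := by
  simp only [positiveFiberSet, hfg.inter_preimage_eq]

lemma mapsTo_positiveFiberSet_comp (hI : IsLowerSet I) (W : Set X) (f ψ : X → X) :
    MapsTo ψ (positiveFiberSet I W f) (positiveFiberSet I W (ψ ∘ f)) :=
  fun _ hy hy' => hy (hI (inter_subset_inter_right W fun _ hz => congrArg ψ hz) hy')

lemma notMem_of_subset_union (hI : IsLowerSet I) (hun : ∀ A B, A ∈ I → B ∈ I → A ∪ B ∈ I)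
    {A B C : Set X} (hA : A ∉ I) (hB : B ∈ I) (hABC : A ⊆ C ∪ B) : C ∉ I :=
  fun hC => hA (hI hABC (hun C B hC hB))

variable [TopologicalSpace X] [MeasurableSpace X]

lemma mRel_iff [Nonempty X] {E : Set X} (hE : MeasurableSet E) :
    MRel I E ↔ ∃ f : X → X, Measurable f ∧ ∀ y, E ∩ f ⁻¹' {y} ∉ I := by
  have key (f : X → X) (y : X) :
      Subtype.val '' ((f ∘ Subtype.val : E → X) ⁻¹' {y}) = E ∩ f ⁻¹' {y} :=
    Subtype.image_preimage_coe E (f ⁻¹' {y})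
  constructor
  · rintro ⟨g, hg, hgI⟩
    obtain ⟨f, hf, rfl⟩ :=
      (MeasurableEmbedding.subtype_coe hE).exists_measurable_extend hg fun _ => inferInstance
    exact ⟨f, hf, fun y => by simpa only [← key] using hgI y⟩
  · rintro ⟨f, hf, hfI⟩
    exact ⟨f ∘ Subtype.val, hf.comp measurable_subtype_coe, fun y => by rw [key]; exact hfI y⟩

end Fibers

section Main

variable {X : Type*} [TopologicalSpace X] [MeasurableSpace X] {I : Set (Set X)}

def MeetsPerfectSetsNear (I : Set (Set X)) (g : X → X) (x : X) : Prop :=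
  ∀ W : Set X, IsOpen W → x ∈ W → ∀ R : Set X, Perfect R → R.Nonempty →
    (R ∩ positiveFiberSet I W g).Nonempty

lemma exists_perfect_subset_positiveFiberSet_of_meetsPerfectSetsNear [PolishSpace X] [BorelSpace X]
    [Uncountable X] (hI : IsLowerSet I) {g : X → X} {x : X} (hg : Measurable g)
    (hgx : MeetsPerfectSetsNear I g x) :
    ∃ f : X → X, Measurable f ∧ ∃ K : Set X, Perfect K ∧ K.Nonempty ∧
      ∀ W : Set X, IsOpen W → x ∈ W → K ⊆ positiveFiberSet I W f := by
  obtain ⟨σ, hσ, K, hK, hKne, hKσ⟩ := exists_measurable_perfect_subset_fibers (X := X)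
  refine ⟨σ ∘ g, hσ.comp hg, K, hK, hKne, fun W hW hxW y hy => ?_⟩
  obtain ⟨Q, hQσ, hQ, hQne⟩ := hKσ y hy
  obtain ⟨w, hwQ, hw⟩ := hgx W hW hxW Q hQ hQne
  have hσw : σ w = y := hQσ hwQ
  exact hσw ▸ mapsTo_positiveFiberSet_comp hI W g σ hw

lemma exists_perfect_subset_positiveFiberSet_sdiff [OpensMeasurableSpace X] (hI : IsLowerSet I)
    (hun : ∀ A B, A ∈ I → B ∈ I → A ∪ B ∈ I) {x : X} (hM : MPrimeAt I x)
    (hnot : ∀ g : X → X, Measurable g → ¬ MeetsPerfectSetsNear I g x) (W : OpenNhdsOf x) :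
    ∃ g : X → X, Measurable g ∧ ∃ W' ≤ W, ∃ R : Set X, Perfect R ∧ R.Nonempty ∧
      R ⊆ positiveFiberSet I (W \ W') g := by
  have : Nonempty X := ⟨x⟩
  obtain ⟨g, hg, hgW⟩ := (mRel_iff W.isOpen.measurableSet).mp (hM W W.isOpen W.mem)
  have hgx := hnot g hg
  simp only [MeetsPerfectSetsNear, not_forall, not_nonempty_iff_eq_empty] at hgx
  obtain ⟨V, hV, hxV, R, hR, hRne, hRV⟩ := hgx
  refine ⟨g, hg, W ⊓ ⟨⟨V, hV⟩, hxV⟩, inf_le_left, R, hR, hRne, fun w hw => ?_⟩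
  have hVw : V ∩ g ⁻¹' {w} ∈ I := of_not_not fun h => eq_empty_iff_forall_notMem.mp hRV w ⟨hw, h⟩
  refine notMem_of_subset_union hI hun (hgW w) hVw fun z hz => ?_
  by_cases hzV : z ∈ V
  · exact Or.inr ⟨hzV, hz.2⟩
  · exact Or.inl ⟨⟨hz.1, fun h => hzV h.2⟩, hz.2⟩

lemma exists_perfect_subset_positiveFiberSet_of_sdiff [OpensMeasurableSpace X]
    (hI : IsLowerSet I) {x : X}
    (hshrink : ∀ W : OpenNhdsOf x, ∃ g : X → X, Measurable g ∧ ∃ W' ≤ W, ∃ R : Set X,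
      Perfect R ∧ R.Nonempty ∧ R ⊆ positiveFiberSet I (W \ W') g)
    (U : ℕ → Set X) (hU : ∀ n, IsOpen (U n)) :
    ∃ f : X → X, Measurable f ∧
      ∀ n, x ∈ U n → ∃ P ⊆ positiveFiberSet I (U n) f, Perfect P ∧ P.Nonempty := by
  classical
  choose g hg next hnext R hR hRne hRg using hshrink
  let V (n : ℕ) : OpenNhdsOf x := if h : x ∈ U n then ⟨⟨U n, hU n⟩, h⟩ else ⊤
  have hVU (n : ℕ) (h : x ∈ U n) : (V n : Set X) ⊆ U n := by
    simp only [V, dif_pos h]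
    exact subset_rfl
  let N (n : ℕ) : OpenNhdsOf x :=
    Nat.rec (motive := fun _ => OpenNhdsOf x) (V 0) (fun k Nk => next Nk ⊓ V (k + 1)) n
  have hN_succ (k : ℕ) : N (k + 1) ≤ next (N k) := inf_le_left
  have hNV : ∀ k, N k ≤ V k := by
    rintro (_ | k)
    · exact le_rfl
    · exact inf_le_right
  have hN : Antitone N := antitone_nat_of_succ_le fun k => (hN_succ k).trans (hnext _)
  let D (k : ℕ) : Set X := SetLike.coe (N k) \ SetLike.coe (next (N k))
  have hD : Pairwise (Disjoint on D) := (pairwise_disjoint_on D).mpr fun j k hjk =>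
    disjoint_left.mpr fun z hzj hzk => hzj.2 (hN_succ j (hN hjk hzk.1))
  obtain ⟨f, hf, hfg⟩ := exists_measurable_piecewise D
    (fun k => (N k).isOpen.measurableSet.diff (next (N k)).isOpen.measurableSet)
    (fun k => g (N k)) (fun k => hg _) fun j k hjk z hz => ((hD hjk).le_bot hz).elim
  refine ⟨f, hf, fun n hn => ⟨R (N n), ?_, hR _, hRne _⟩⟩
  have hDU : D n ⊆ U n :=
    sdiff_subset.trans ((SetLike.coe_subset_coe.mpr (hNV n)).trans (hVU n hn))
  calc R (N n) ⊆ positiveFiberSet I (D n) (g (N n)) := hRg _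
    _ = positiveFiberSet I (D n) f := (positiveFiberSet_congr (hfg n)).symm
    _ ⊆ positiveFiberSet I (U n) f := positiveFiberSet_mono hI hDU f

lemma mRel_of_perfect_subset_positiveFiberSet [PolishSpace X] [BorelSpace X] [Uncountable X]
    (hI : IsLowerSet I) {E W : Set X} (hE : MeasurableSet E) (hWE : W ⊆ E) {f : X → X}
    (hf : Measurable f) {P : Set X} (hP : Perfect P) (hPne : P.Nonempty)
    (hPf : P ⊆ positiveFiberSet I W f) : MRel I E := by
  obtain ⟨ψ, hψ, hψP⟩ := hP.exists_measurable_surjOn (Y := X) hPne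
  refine (mRel_iff hE).mpr ⟨ψ ∘ f, hψ.comp hf, fun y => ?_⟩
  obtain ⟨p, hp, rfl⟩ := hψP (mem_univ y)
  exact positiveFiberSet_mono hI hWE _ (mapsTo_positiveFiberSet_comp hI W f ψ (hPf hp))

end Main

theorem stmt16_general {X : Type*} [TopologicalSpace X] [PolishSpace X]
    [MeasurableSpace X] [BorelSpace X] [Uncountable X]
    (I : Set (Set X))
    (hsub : ∀ A B : Set X, A ⊆ B → B ∈ I → A ∈ I)
    (hun : ∀ A B : Set X, A ∈ I → B ∈ I → A ∪ B ∈ I)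
    (U : ℕ → Set X) (hbasis : TopologicalSpace.IsTopologicalBasis (Set.range U))
    (x : X) :
    MPrimeAt I x ↔
      ∃ f : X → X, Measurable f ∧
        ∀ n : ℕ, x ∈ U n → ∃ P : Set X, P ⊆ Hset I U f n ∧ Perfect P ∧ P.Nonempty := by
  have hI : IsLowerSet I := fun A B hBA hA => hsub B A hBA hA
  have hU (n : ℕ) : IsOpen (U n) := hbasis.isOpen ⟨n, rfl⟩
  constructor
  · intro hM
    by_cases hmeet : ∃ g : X → X, Measurable g ∧ MeetsPerfectSetsNear I g x
    · obtain ⟨g, hg, hgx⟩ := hmeet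
      obtain ⟨f, hf, K, hK, hKne, hKf⟩ :=
        exists_perfect_subset_positiveFiberSet_of_meetsPerfectSetsNear hI hg hgx
      exact ⟨f, hf, fun n hn => ⟨K, hKf (U n) (hU n) hn, hK, hKne⟩⟩
    · simp only [not_exists, not_and] at hmeet
      exact exists_perfect_subset_positiveFiberSet_of_sdiff hI
        (exists_perfect_subset_positiveFiberSet_sdiff hI hun hM hmeet) U hU
  · rintro ⟨f, hf, hfx⟩ W hW hxW
    obtain ⟨_, ⟨n, rfl⟩, hxn, hnW⟩ := hbasis.exists_subset_of_mem_open hxW hW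
    obtain ⟨P, hPf, hP, hPne⟩ := hfx n hxn
    exact mRel_of_perfect_subset_positiveFiberSet hI hW.measurableSet hnW hf hP hPne hPf

/-- Let `X` be an uncountable Polish space, `I` an ideal on `X` containing no nonempty
open set, `{U n}` a countable base of nonempty open sets, and `x ∈ X`.  Then `I` has
property (M'_x) iff there is a Borel function `f : X → X` such that for each `n` with
`x ∈ U n` the set `H_n(f)` contains a nonempty perfect set. -/
theorem stmt16 {X : Type*} [TopologicalSpace X] [PolishSpace X]
    [MeasurableSpace X] [BorelSpace X] [Uncountable X]
    (I : Set (Set X))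
    (hsub : ∀ A B : Set X, A ⊆ B → B ∈ I → A ∈ I)
    (hun : ∀ A B : Set X, A ∈ I → B ∈ I → A ∪ B ∈ I)
    (hopen : ∀ V : Set X, IsOpen V → V.Nonempty → V ∉ I)
    (U : ℕ → Set X) (hbasis : TopologicalSpace.IsTopologicalBasis (Set.range U))
    (hUne : ∀ n, (U n).Nonempty) (x : X) :
    MPrimeAt I x ↔
      ∃ f : X → X, Measurable f ∧
        ∀ n : ℕ, x ∈ U n → ∃ P : Set X, P ⊆ Hset I U f n ∧ Perfect P ∧ P.Nonempty :=
  stmt16_general I hsub hun U hbasis x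
end
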